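/- arXiv:2305.19259 — 6 statements merged into one kernel-verified Lean document; each statement's English description precedes it below -/
import Mathlib

section
/- Let (x_t) be the iterates x_{t+1} = x_t − γ∇f_{i_t}(x_t) with step size 0 < γ ≤ 1/(8√3·L), and set τ = ⌊1/(8√3·L·γ)⌋. Suppose σ_τ² is a finite constant such that for every chunk index k = 0,…,⌊T/τ⌋, every offset j = 0,…,τ−1 with kτ+j ≤ T, and every x ∈ ℝ^d, ‖∑_{t=kτ}^{min{kτ+j,T}} (∇f_{i_t}(x) − ∇f(x))‖² ≤ σ_τ². If f is bounded below with f* = inf f, then (1/(T+1)) ∑_{t=0}^{T} ‖∇f(x_t)‖² ≤ 4(f(x_0) − f*)/(γ(T+1)) + 10532·L²·γ²·σ_τ². -/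
open scoped BigOperators


section Aux
variable {E : Type*} [NormedAddCommGroup E] [InnerProductSpace ℝ E] [CompleteSpace E]

lemma aux_cs_sum (s : Finset ℕ) (v : ℕ → E) :
    ‖∑ i ∈ s, v i‖^2 ≤ (s.card : ℝ) * ∑ i ∈ s, ‖v i‖^2 := by
  calc ‖∑ i ∈ s, v i‖^2 ≤ (∑ i ∈ s, ‖v i‖)^2 := by
        gcongr; exact norm_sum_le _ _
    _ ≤ (s.card : ℝ) * ∑ i ∈ s, ‖v i‖^2 := by
        have := sq_sum_le_card_mul_sum_sq (s := s) (f := fun i => ‖v i‖)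
        exact_mod_cast this

lemma aux_fderiv_inner (f : E → ℝ) {z : E} (hf : DifferentiableAt ℝ f z) (w : E) :
    fderiv ℝ f z w = @inner ℝ _ _ (gradient f z) w := by
  have h := hf.hasGradientAt.hasFDerivAt
  rw [h.fderiv]; simp [InnerProductSpace.toDual_apply_apply]

lemma aux_descent (f : E → ℝ) (hf : Differentiable ℝ f) {L : ℝ}
    (hlip : ∀ a b : E, ‖gradient f a - gradient f b‖ ≤ L * ‖a - b‖) (x y : E) :
    f y ≤ f x + @inner ℝ _ _ (gradient f x) (y - x) + L / 2 * ‖y - x‖ ^ 2 := by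
  set v := y - x with hv
  have hc : ∀ t : ℝ, HasDerivAt (fun t : ℝ => x + t • v) v t := by
    intro t
    simpa using ((hasDerivAt_id t).smul_const v).const_add x
  have hφ : ∀ t : ℝ, HasDerivAt (fun t : ℝ => f (x + t • v))
      (@inner ℝ _ _ (gradient f (x + t • v)) v) t := by
    intro t
    have h1 := (hf (x + t • v)).hasFDerivAt.comp_hasDerivAt t (hc t)
    rw [aux_fderiv_inner f (hf _) v] at h1
    exact h1
  set c0 : ℝ := @inner ℝ _ _ (gradient f x) v with hc0
  have hψ : ∀ t : ℝ, HasDerivAt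
      (fun t : ℝ => f (x + t • v) - t * c0 - L / 2 * t ^ 2 * ‖v‖ ^ 2)
      (@inner ℝ _ _ (gradient f (x + t • v)) v - c0 - L * t * ‖v‖ ^ 2) t := by
    intro t
    have h1 : HasDerivAt (fun t : ℝ => t * c0) c0 t := by
      simpa using (hasDerivAt_id t).mul_const c0
    have h2 : HasDerivAt (fun t : ℝ => L / 2 * t ^ 2 * ‖v‖ ^ 2) (L * t * ‖v‖ ^ 2) t := by
      have := ((hasDerivAt_pow 2 t).const_mul (L / 2)).mul_const (‖v‖ ^ 2)
      refine this.congr_deriv ?_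
      rw [show (2:ℕ) - 1 = 1 from rfl]; push_cast; ring
    exact ((hφ t).sub h1).sub h2
  have hmono : AntitoneOn (fun t : ℝ => f (x + t • v) - t * c0 - L / 2 * t ^ 2 * ‖v‖ ^ 2)
      (Set.Icc (0:ℝ) 1) := by
    apply antitoneOn_of_deriv_nonpos (convex_Icc 0 1)
    · exact Continuous.continuousOn (by
        have : Continuous fun t : ℝ => f (x + t • v) :=
          hf.continuous.comp (by continuity)
        continuity)
    · intro t ht
      exact ((hψ t).differentiableAt).differentiableWithinAt
    · intro t ht
      rw [interior_Icc] at ht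
      rw [(hψ t).deriv]
      have hb : ‖gradient f (x + t • v) - gradient f x‖ ≤ L * (t * ‖v‖) := by
        calc ‖gradient f (x + t • v) - gradient f x‖ ≤ L * ‖x + t • v - x‖ := hlip _ _
          _ = L * (|t| * ‖v‖) := by rw [add_sub_cancel_left, norm_smul]; simp
          _ = L * (t * ‖v‖) := by rw [abs_of_pos ht.1]
      have hib : @inner ℝ _ _ (gradient f (x + t • v)) v - c0 ≤ L * t * ‖v‖ ^ 2 := by
        have h3 : @inner ℝ _ _ (gradient f (x + t • v)) v - c0
            = @inner ℝ _ _ (gradient f (x + t • v) - gradient f x) v := by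
          rw [hc0, inner_sub_left]
        rw [h3]
        calc @inner ℝ _ _ (gradient f (x + t • v) - gradient f x) v
            ≤ ‖gradient f (x + t • v) - gradient f x‖ * ‖v‖ := real_inner_le_norm _ _
          _ ≤ L * (t * ‖v‖) * ‖v‖ := by
              apply mul_le_mul_of_nonneg_right hb (norm_nonneg _)
          _ = L * t * ‖v‖ ^ 2 := by ring
      linarith
  have h01 := hmono (Set.left_mem_Icc.2 zero_le_one) (Set.right_mem_Icc.2 zero_le_one) zero_le_one
  simp only [zero_smul, add_zero, one_smul] at h01
  have hxy : x + v = y := by rw [hv]; abel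
  rw [hxy] at h01
  nlinarith [h01]

lemma aux_gradsq (f : E → ℝ) (hf : Differentiable ℝ f) {L : ℝ} (hL : 0 < L)
    (hlip : ∀ a b : E, ‖gradient f a - gradient f b‖ ≤ L * ‖a - b‖)
    {fstar : ℝ} (hbdd : ∀ y, fstar ≤ f y) (z : E) :
    ‖gradient f z‖ ^ 2 ≤ 2 * L * (f z - fstar) := by
  have h := aux_descent f hf hlip z (z - (1/L) • gradient f z)
  have h2 : z - (1/L) • gradient f z - z = -((1/L) • gradient f z) := by abel
  rw [h2] at h
  have h3 : @inner ℝ _ _ (gradient f z) (-((1/L) • gradient f z)) = -(1/L) * ‖gradient f z‖^2 := by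
    rw [inner_neg_right, inner_smul_right, real_inner_self_eq_norm_sq]; ring
  have h4 : ‖-((1/L) • gradient f z)‖^2 = (1/L)^2 * ‖gradient f z‖^2 := by
    rw [norm_neg, norm_smul, Real.norm_eq_abs, abs_of_pos (show (0:ℝ) < 1/L by positivity)]
    ring
  rw [h3, h4] at h
  have h5 := hbdd (z - (1/L) • gradient f z)
  have : fstar ≤ f z - 1/(2*L) * ‖gradient f z‖^2 := by
    calc fstar ≤ f (z - (1/L) • gradient f z) := h5
      _ ≤ f z + -(1/L) * ‖gradient f z‖^2 + L/2 * ((1/L)^2 * ‖gradient f z‖^2) := h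
      _ = f z - 1/(2*L) * ‖gradient f z‖^2 := by field_simp; ring
  have h6 : 1/(2*L) * ‖gradient f z‖^2 ≤ f z - fstar := by linarith
  calc ‖gradient f z‖^2 = 2*L * (1/(2*L) * ‖gradient f z‖^2) := by field_simp
    _ ≤ 2*L*(f z - fstar) := by
        apply mul_le_mul_of_nonneg_left h6 (by positivity)

lemma aux_disp {γ : ℝ} (P : ℕ → E → E) (x : ℕ → E)
    (hx : ∀ t, x (t+1) = x t - γ • P t (x t)) :
    ∀ s t, s ≤ t → x t = x s - γ • ∑ r ∈ Finset.Ico s t, P r (x r) := by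
  intro s
  intro t
  induction t with
  | zero => intro hst; interval_cases s; simp
  | succ t ih =>
      intro hst
      rcases Nat.lt_or_ge s (t+1) with hlt | hge
      · have hst' : s ≤ t := Nat.lt_succ_iff.mp hlt
        rw [hx t, Finset.sum_Ico_succ_top hst', smul_add, ih hst']
        abel
      · have : s = t + 1 := le_antisymm hst hge
        subst this; simp

end Aux
section Chunk
variable {E : Type*} [NormedAddCommGroup E] [InnerProductSpace ℝ E] [CompleteSpace E]

lemma aux_tri3 {a b c x : ℝ} (ha : 0 ≤ a) (hb : 0 ≤ b) (hc : 0 ≤ c) (hx : 0 ≤ x)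
    (h : x ≤ a + b + c) : x^2 ≤ 3*(a^2 + b^2 + c^2) := by
  nlinarith [sq_nonneg (a-b), sq_nonneg (a-c), sq_nonneg (b-c)]

set_option maxHeartbeats 1000000 in
lemma aux_chunk_S {L γ : ℝ} (hL : 0 < L) (hγ : 0 < γ)
    (P : ℕ → E → E) (x : ℕ → E)
    (hx : ∀ t, x (t+1) = x t - γ • P t (x t))
    (hPlip : ∀ t (a b : E), ‖P t a - P t b‖ ≤ L * ‖a - b‖)
    (s m : ℕ) (σ2 : ℝ) (hσ2 : 0 ≤ σ2) (g : E)
    (hwin : ∀ t ∈ Finset.Ico s (s+m), ‖∑ r ∈ Finset.Ico s t, (P r (x s) - g)‖^2 ≤ σ2)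
    (h192 : L^2*γ^2*(m:ℝ)^2 ≤ 1/192) :
    ∑ t ∈ Finset.Ico s (s+m), ‖x t - x s‖^2
      ≤ (64/21)*γ^2*(m:ℝ)*(σ2 + (m:ℝ)^2*‖g‖^2) := by
  set S := ∑ t ∈ Finset.Ico s (s+m), ‖x t - x s‖^2 with hSdef
  have hS0 : 0 ≤ S := Finset.sum_nonneg fun t _ => by positivity
  have key : ∀ t ∈ Finset.Ico s (s+m),
      ‖x t - x s‖^2 ≤ 3*γ^2*((m:ℝ)*L^2*S + σ2 + (m:ℝ)^2*‖g‖^2) := by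
    intro t ht
    rw [Finset.mem_Ico] at ht
    obtain ⟨hst, htm⟩ := ht
    have hdisp := aux_disp P x hx s t hst
    set A := ∑ r ∈ Finset.Ico s t, (P r (x r) - P r (x s)) with hA
    set B := ∑ r ∈ Finset.Ico s t, (P r (x s) - g) with hB
    have hcard : (Finset.Ico s t).card = t - s := Nat.card_Ico s t
    have hW : ∑ r ∈ Finset.Ico s t, P r (x r) = A + B + (t - s) • g := by
      rw [hA, hB, ← Finset.sum_add_distrib]
      rw [← hcard, ← Finset.sum_const, ← Finset.sum_add_distrib]
      apply Finset.sum_congr rfl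
      intro r _
      abel
    have hnorm : ‖x t - x s‖^2 = γ^2 * ‖A + B + (t-s) • g‖^2 := by
      rw [hdisp, hW]
      have h5 : x s - γ • (A + B + (t-s) • g) - x s = -(γ • (A + B + (t-s) • g)) := by abel
      rw [h5, norm_neg, norm_smul, Real.norm_eq_abs, abs_of_pos hγ, mul_pow]
    have hts : ((t-s:ℕ):ℝ) ≤ (m:ℝ) := by
      have : t - s ≤ m := by omega
      exact_mod_cast this
    have hA2 : ‖A‖^2 ≤ (m:ℝ) * L^2 * S := by
      have h1 : ‖A‖^2 ≤ ((t-s:ℕ):ℝ) * ∑ r ∈ Finset.Ico s t, ‖P r (x r) - P r (x s)‖^2 := by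
        have := aux_cs_sum (Finset.Ico s t) (fun r => P r (x r) - P r (x s))
        rwa [hcard] at this
      have h2 : ∑ r ∈ Finset.Ico s t, ‖P r (x r) - P r (x s)‖^2
          ≤ L^2 * ∑ r ∈ Finset.Ico s t, ‖x r - x s‖^2 := by
        rw [Finset.mul_sum]
        apply Finset.sum_le_sum
        intro r _
        have := hPlip r (x r) (x s)
        nlinarith [norm_nonneg (P r (x r) - P r (x s)), norm_nonneg (x r - x s)]
      have h3 : ∑ r ∈ Finset.Ico s t, ‖x r - x s‖^2 ≤ S := by
        apply Finset.sum_le_sum_of_subset_of_nonneg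
        · exact Finset.Ico_subset_Ico le_rfl (le_of_lt htm)
        · intro i _ _; positivity
      have h4 : ((t-s:ℕ):ℝ) * ∑ r ∈ Finset.Ico s t, ‖P r (x r) - P r (x s)‖^2
          ≤ (m:ℝ) * (L^2 * S) := by
        apply mul_le_mul hts (le_trans h2 (by nlinarith))
          (Finset.sum_nonneg fun r _ => by positivity) (by positivity)
      calc ‖A‖^2 ≤ ((t-s:ℕ):ℝ) * ∑ r ∈ Finset.Ico s t, ‖P r (x r) - P r (x s)‖^2 := h1
        _ ≤ (m:ℝ) * (L^2 * S) := h4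
        _ = (m:ℝ) * L^2 * S := by ring
    have hB2 : ‖B‖^2 ≤ σ2 := hwin t (Finset.mem_Ico.mpr ⟨hst, htm⟩)
    have hC2 : ‖(t-s) • g‖^2 ≤ (m:ℝ)^2 * ‖g‖^2 := by
      rw [← Nat.cast_smul_eq_nsmul ℝ, norm_smul, Real.norm_eq_abs, abs_of_nonneg (by positivity), mul_pow]
      have hsq : ((t-s:ℕ):ℝ)^2 ≤ (m:ℝ)^2 := by nlinarith [Nat.cast_nonneg (α := ℝ) (t-s)]
      exact mul_le_mul_of_nonneg_right hsq (by positivity)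
    have htri : ‖A + B + (t-s) • g‖^2 ≤ 3*(‖A‖^2 + ‖B‖^2 + ‖(t-s) • g‖^2) := by
      apply aux_tri3 (norm_nonneg _) (norm_nonneg _) (norm_nonneg _) (norm_nonneg _)
      exact le_trans (norm_add_le _ _) (by gcongr; exact norm_add_le _ _)
    calc ‖x t - x s‖^2 = γ^2 * ‖A + B + (t-s) • g‖^2 := hnorm
      _ ≤ γ^2 * (3*(‖A‖^2 + ‖B‖^2 + ‖(t-s) • g‖^2)) :=
          mul_le_mul_of_nonneg_left htri (sq_nonneg γ)
      _ ≤ 3*γ^2*((m:ℝ)*L^2*S + σ2 + (m:ℝ)^2*‖g‖^2) := by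
          have k1 := mul_le_mul_of_nonneg_left hA2 (sq_nonneg γ)
          have k2 := mul_le_mul_of_nonneg_left hB2 (sq_nonneg γ)
          have k3 := mul_le_mul_of_nonneg_left hC2 (sq_nonneg γ)
          linarith
  have hsum : S ≤ (m:ℝ) * (3*γ^2*((m:ℝ)*L^2*S + σ2 + (m:ℝ)^2*‖g‖^2)) := by
    calc S ≤ ∑ _t ∈ Finset.Ico s (s+m), 3*γ^2*((m:ℝ)*L^2*S + σ2 + (m:ℝ)^2*‖g‖^2) :=
          Finset.sum_le_sum key
      _ = (m:ℝ) * (3*γ^2*((m:ℝ)*L^2*S + σ2 + (m:ℝ)^2*‖g‖^2)) := by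
          rw [Finset.sum_const, Nat.card_Ico, nsmul_eq_mul]
          have h6 : s + m - s = m := by omega
          rw [h6]
  have hg2 : 0 ≤ ‖g‖^2 := by positivity
  have hm0 : (0:ℝ) ≤ (m:ℝ) := by positivity
  have hk : L^2*γ^2*(m:ℝ)^2 * S ≤ (1/192) * S := mul_le_mul_of_nonneg_right h192 hS0
  nlinarith [mul_nonneg (mul_nonneg (sq_nonneg γ) hm0) hσ2,
    mul_nonneg (mul_nonneg (sq_nonneg γ) hm0) (mul_nonneg (mul_nonneg hm0 hm0) hg2)]

end Chunk
section Chunk2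
variable {E : Type*} [NormedAddCommGroup E] [InnerProductSpace ℝ E] [CompleteSpace E]

set_option maxHeartbeats 1000000 in
lemma aux_chunk_grads {L γ : ℝ} (hL : 0 < L) (hγ : 0 < γ)
    (P : ℕ → E → E) (x : ℕ → E)
    (hx : ∀ t, x (t+1) = x t - γ • P t (x t))
    (hPlip : ∀ t (a b : E), ‖P t a - P t b‖ ≤ L * ‖a - b‖)
    (G : E → E)
    (hGlip : ∀ a b : E, ‖G a - G b‖ ≤ L * ‖a - b‖)
    (s m : ℕ) (σ2 : ℝ) (hσ2 : 0 ≤ σ2)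
    (hwin : ∀ t ∈ Finset.Ico s (s+m),
      ‖∑ r ∈ Finset.Ico s t, (P r (x s) - G (x s))‖^2 ≤ σ2)
    (h192 : L^2*γ^2*(m:ℝ)^2 ≤ 1/192) :
    ∑ t ∈ Finset.Ico s (s+m), ‖G (x t)‖^2
      ≤ (128/63)*(m:ℝ)*‖G (x s)‖^2 + (128/21)*L^2*γ^2*(m:ℝ)*σ2 := by
  have hS := aux_chunk_S hL hγ P x hx hPlip s m σ2 hσ2 (G (x s)) hwin h192
  set S := ∑ t ∈ Finset.Ico s (s+m), ‖x t - x s‖^2 with hSdef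
  set g2 := ‖G (x s)‖^2 with hg2def
  have hg2 : 0 ≤ g2 := by positivity
  have key : ∀ t ∈ Finset.Ico s (s+m), ‖G (x t)‖^2 ≤ 2*g2 + 2*L^2*‖x t - x s‖^2 := by
    intro t _
    have h1 : ‖G (x t)‖ ≤ ‖G (x s)‖ + L*‖x t - x s‖ := by
      calc ‖G (x t)‖ ≤ ‖G (x s)‖ + ‖G (x t) - G (x s)‖ := by
            have := norm_sub_norm_le (G (x t)) (G (x s))
            linarith [abs_le.mp (abs_norm_sub_norm_le (G (x t)) (G (x s)))]
        _ ≤ ‖G (x s)‖ + L*‖x t - x s‖ := by gcongr; exact hGlip _ _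
    nlinarith [norm_nonneg (G (x t)), norm_nonneg (G (x s)), norm_nonneg (x t - x s),
      sq_nonneg (‖G (x s)‖ - L*‖x t - x s‖), mul_pos hL hL]
  have hsum : ∑ t ∈ Finset.Ico s (s+m), ‖G (x t)‖^2
      ≤ 2*(m:ℝ)*g2 + 2*L^2*S := by
    calc ∑ t ∈ Finset.Ico s (s+m), ‖G (x t)‖^2
        ≤ ∑ t ∈ Finset.Ico s (s+m), (2*g2 + 2*L^2*‖x t - x s‖^2) := Finset.sum_le_sum key
      _ = 2*(m:ℝ)*g2 + 2*L^2*S := by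
          rw [Finset.sum_add_distrib, Finset.sum_const, Nat.card_Ico, ← Finset.mul_sum,
            nsmul_eq_mul]
          have h6 : s + m - s = m := by omega
          rw [h6, ← hSdef]
          ring
  have hL2S : 2*L^2*S ≤ (128/21)*L^2*γ^2*(m:ℝ)*σ2 + (2/63)*(m:ℝ)*g2 := by
    have hS' : 2*L^2*S ≤ 2*L^2*((64/21)*γ^2*(m:ℝ)*(σ2 + (m:ℝ)^2*g2)) := by
      apply mul_le_mul_of_nonneg_left hS (by positivity)
    have hexp : 2*L^2*((64/21)*γ^2*(m:ℝ)*(σ2 + (m:ℝ)^2*g2))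
        = (128/21)*L^2*γ^2*(m:ℝ)*σ2 + (128/21)*(L^2*γ^2*(m:ℝ)^2)*((m:ℝ)*g2) := by ring
    have hb : (128/21)*(L^2*γ^2*(m:ℝ)^2)*((m:ℝ)*g2) ≤ (128/21)*(1/192)*((m:ℝ)*g2) := by
      apply mul_le_mul_of_nonneg_right _ (by positivity)
      apply mul_le_mul_of_nonneg_left h192 (by norm_num)
    have : (128/21)*((1:ℝ)/192) = 2/63 := by norm_num
    nlinarith
  linarith

set_option maxHeartbeats 4000000 in
lemma aux_chunk_descent {L γ : ℝ} (hL : 0 < L) (hγ : 0 < γ)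
    (P : ℕ → E → E) (x : ℕ → E)
    (hx : ∀ t, x (t+1) = x t - γ • P t (x t))
    (hPlip : ∀ t (a b : E), ‖P t a - P t b‖ ≤ L * ‖a - b‖)
    (f : E → ℝ) (hfd : Differentiable ℝ f)
    (hGlip : ∀ a b : E, ‖gradient f a - gradient f b‖ ≤ L * ‖a - b‖)
    (s m : ℕ) (hm : 1 ≤ m) (σ2 : ℝ) (hσ2 : 0 ≤ σ2)
    (hwin : ∀ t ∈ Finset.Ico s (s+m),
      ‖∑ r ∈ Finset.Ico s t, (P r (x s) - gradient f (x s))‖^2 ≤ σ2)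
    (hwin2 : ‖∑ t ∈ Finset.Ico s (s+m), (P t (x s) - gradient f (x s))‖^2 ≤ σ2)
    (h13 : L*γ*(m:ℝ) ≤ 1/13) (h192 : L^2*γ^2*(m:ℝ)^2 ≤ 1/192) :
    f (x (s+m)) ≤ f (x s) - (3/5)*γ*(m:ℝ)*‖gradient f (x s)‖^2 + (9/4)*γ*σ2/(m:ℝ) := by
  have hS := aux_chunk_S hL hγ P x hx hPlip s m σ2 hσ2 (gradient f (x s)) hwin h192
  set g := gradient f (x s) with hgdef
  set S := ∑ t ∈ Finset.Ico s (s+m), ‖x t - x s‖^2 with hSdef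
  have hS0 : 0 ≤ S := Finset.sum_nonneg fun t _ => by positivity
  set mr : ℝ := (m:ℝ) with hmr
  have hmr1 : 1 ≤ mr := by rw [hmr]; exact_mod_cast hm
  have hmr0 : 0 < mr := by linarith
  -- displacement over the whole chunk
  have hdisp := aux_disp P x hx s (s+m) (Nat.le_add_right s m)
  set A := ∑ t ∈ Finset.Ico s (s+m), (P t (x t) - P t (x s)) with hA
  set B := ∑ t ∈ Finset.Ico s (s+m), (P t (x s) - g) with hB
  set v := A + B with hv
  have hcard : (Finset.Ico s (s+m)).card = m := by rw [Nat.card_Ico]; omega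
  have hW : ∑ t ∈ Finset.Ico s (s+m), P t (x t) = v + m • g := by
    have h7 : (m • g : E) = ∑ _t ∈ Finset.Ico s (s+m), g := by rw [Finset.sum_const, hcard]
    rw [hv, hA, hB, h7, ← Finset.sum_add_distrib, ← Finset.sum_add_distrib]
    exact Finset.sum_congr rfl fun r _ => by abel
  -- descent lemma
  have hdesc := aux_descent f hfd hGlip (x s) (x (s+m))
  have hxm : x (s+m) - x s = -(γ • (v + m • g)) := by
    rw [hdisp, hW]; abel
  rw [hxm] at hdesc
  have hinner : @inner ℝ _ _ g (-(γ • (v + m • g))) = -γ*(@inner ℝ _ _ g v) - γ*mr*‖g‖^2 := by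
    rw [inner_neg_right, inner_smul_right, inner_add_right, ← Nat.cast_smul_eq_nsmul ℝ m g,
      inner_smul_right, real_inner_self_eq_norm_sq]
    push_cast
    ring
  have hnormW : ‖-(γ • (v + m • g))‖^2 = γ^2*‖v + m • g‖^2 := by
    rw [norm_neg, norm_smul, Real.norm_eq_abs, abs_of_pos hγ, mul_pow]
  rw [hinner, hnormW] at hdesc
  -- bound ‖v‖²
  have hA2 : ‖A‖^2 ≤ mr * L^2 * S := by
    have h1 : ‖A‖^2 ≤ (mr:ℝ) * ∑ t ∈ Finset.Ico s (s+m), ‖P t (x t) - P t (x s)‖^2 := by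
      have := aux_cs_sum (Finset.Ico s (s+m)) (fun t => P t (x t) - P t (x s))
      rwa [hcard] at this
    have h2 : ∑ t ∈ Finset.Ico s (s+m), ‖P t (x t) - P t (x s)‖^2 ≤ L^2 * S := by
      rw [Finset.mul_sum]
      apply Finset.sum_le_sum
      intro r _
      have := hPlip r (x r) (x s)
      nlinarith [norm_nonneg (P r (x r) - P r (x s)), norm_nonneg (x r - x s)]
    calc ‖A‖^2 ≤ mr * ∑ t ∈ Finset.Ico s (s+m), ‖P t (x t) - P t (x s)‖^2 := h1
      _ ≤ mr * (L^2 * S) := mul_le_mul_of_nonneg_left h2 (by positivity)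
      _ = mr * L^2 * S := by ring
  have hB2 : ‖B‖^2 ≤ σ2 := hwin2
  have hv2 : ‖v‖^2 ≤ 2*mr*L^2*S + 2*σ2 := by
    have h1 : ‖v‖ ≤ ‖A‖ + ‖B‖ := norm_add_le _ _
    nlinarith [norm_nonneg A, norm_nonneg B, norm_nonneg v, sq_nonneg (‖A‖ - ‖B‖)]
  -- ‖v‖² refined
  have hv2' : ‖v‖^2 ≤ (128/63)*σ2 + (2/63)*mr^2*‖g‖^2 := by
    have h1 : 2*mr*L^2*S ≤ 2*mr*L^2*((64/21)*γ^2*mr*(σ2 + mr^2*‖g‖^2)) := by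
      apply mul_le_mul_of_nonneg_left hS (by positivity)
    have h2 : 2*mr*L^2*((64/21)*γ^2*mr*(σ2 + mr^2*‖g‖^2))
        = (128/21)*(L^2*γ^2*mr^2)*σ2 + (128/21)*(L^2*γ^2*mr^2)*(mr^2*‖g‖^2) := by ring
    have h3 : (128/21)*(L^2*γ^2*mr^2)*σ2 ≤ (128/21)*(1/192)*σ2 := by
      apply mul_le_mul_of_nonneg_right _ hσ2
      apply mul_le_mul_of_nonneg_left h192 (by norm_num)
    have h4 : (128/21)*(L^2*γ^2*mr^2)*(mr^2*‖g‖^2) ≤ (128/21)*(1/192)*(mr^2*‖g‖^2) := by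
      apply mul_le_mul_of_nonneg_right _ (by positivity)
      apply mul_le_mul_of_nonneg_left h192 (by norm_num)
    have h5 : (128/21)*((1:ℝ)/192) = 2/63 := by norm_num
    nlinarith
  -- Young for the inner product
  have hyoung : -(@inner ℝ _ _ g v) ≤ (mr/4)*‖g‖^2 + (1/mr)*‖v‖^2 := by
    have h1 : -(@inner ℝ _ _ g v) ≤ ‖g‖*‖v‖ := by
      have := real_inner_le_norm (-g) v
      rw [inner_neg_left] at this
      simpa using this
    have h2 : ‖g‖*‖v‖ ≤ (mr/4)*‖g‖^2 + (1/mr)*‖v‖^2 := by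
      rw [← sub_nonneg]
      have key : (mr/4)*‖g‖^2 + (1/mr)*‖v‖^2 - ‖g‖*‖v‖
          = (1/(4*mr)) * (mr*‖g‖ - 2*‖v‖)^2 := by
        field_simp
        ring
      rw [key]
      positivity
    linarith
  -- ‖v + m•g‖²
  have hWn : ‖v + m • g‖^2 ≤ 2*‖v‖^2 + 2*mr^2*‖g‖^2 := by
    have h1 : ‖v + m • g‖ ≤ ‖v‖ + mr*‖g‖ := by
      calc ‖v + m • g‖ ≤ ‖v‖ + ‖m • g‖ := norm_add_le _ _
        _ = ‖v‖ + mr*‖g‖ := by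
            rw [← Nat.cast_smul_eq_nsmul ℝ, norm_smul, Real.norm_eq_abs,
              abs_of_nonneg (by positivity)]
    nlinarith [norm_nonneg v, norm_nonneg (m • g), norm_nonneg (v + m • g),
      sq_nonneg (‖v‖ - mr*‖g‖), norm_nonneg g, hmr0.le]
  -- assemble
  set V := ‖v‖^2 with hV
  set G2 := ‖g‖^2 with hG2
  have hV0 : 0 ≤ V := by positivity
  have hG20 : 0 ≤ G2 := by positivity
  have hmain : f (x (s+m)) ≤ f (x s) - (3/4)*γ*mr*G2 + γ*((1/mr)*V) + L*γ^2*V + L*γ^2*mr^2*G2 := by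
    have h1 : f (x (s + m)) ≤ f (x s) + (-γ*(@inner ℝ _ _ g v) - γ*mr*G2)
        + L/2 * (γ^2*‖v + m • g‖^2) := hdesc
    have h2 : -γ*(@inner ℝ _ _ g v) ≤ γ*((mr/4)*G2 + (1/mr)*V) := by
      have := mul_le_mul_of_nonneg_left hyoung hγ.le
      calc -γ*(@inner ℝ _ _ g v) = γ * (-(@inner ℝ _ _ g v)) := by ring
        _ ≤ γ*((mr/4)*G2 + (1/mr)*V) := this
    have h3 : L/2 * (γ^2*‖v + m • g‖^2) ≤ L*γ^2*V + L*γ^2*mr^2*G2 := by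
      have := mul_le_mul_of_nonneg_left hWn (by positivity : (0:ℝ) ≤ L/2*γ^2)
      nlinarith
    nlinarith
  -- numeric absorption: Lγ² ≤ (1/13)(γ/mr)
  have hLγ2 : L*γ^2 ≤ (1/13)*(γ/mr) := by
    have h3 : L*γ^2 = ((L*γ*mr)*γ)/mr := by field_simp
    have h4 : (1/13)*(γ/mr) = ((1/13)*γ)/mr := by ring
    rw [h3, h4]
    exact (div_le_div_iff_of_pos_right hmr0).mpr (mul_le_mul_of_nonneg_right h13 hγ.le)
  have hstep2 : f (x (s+m)) ≤ f (x s) - (3/4 - 1/13)*γ*mr*G2 + (14/13)*(γ/mr)*V := by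
    have e1 : L*γ^2*V ≤ (1/13)*(γ/mr)*V := mul_le_mul_of_nonneg_right hLγ2 hV0
    have e2 : L*γ^2*mr^2*G2 ≤ (1/13)*(γ/mr)*mr^2*G2 := by
      apply mul_le_mul_of_nonneg_right _ hG20
      apply mul_le_mul_of_nonneg_right hLγ2 (by positivity)
    have e3 : (1/13)*(γ/mr)*mr^2*G2 = (1/13)*γ*mr*G2 := by field_simp
    have e4 : γ*((1/mr)*V) = (γ/mr)*V := by field_simp
    rw [e3] at e2
    linarith [hmain]
  -- plug hv2'
  have hfin : (14/13)*(γ/mr)*V ≤ (14/13)*(γ/mr)*((128/63)*σ2 + (2/63)*mr^2*G2) := by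
    apply mul_le_mul_of_nonneg_left hv2' (by positivity)
  have hexp : (14/13)*(γ/mr)*((128/63)*σ2 + (2/63)*mr^2*G2)
      = (1792/819)*(γ*σ2/mr) + (28/819)*γ*mr*G2 := by
    field_simp
    ring
  have hσdiv : (1792/819)*(γ*σ2/mr) ≤ (9/4)*(γ*σ2/mr) := by
    apply mul_le_mul_of_nonneg_right (by norm_num)
    positivity
  have hcoef : -(3/4 - 1/13)*γ*mr*G2 + (28/819)*γ*mr*G2 ≤ -(3/5)*γ*mr*G2 := by
    have hpos : (0:ℝ) ≤ γ*mr*G2 := by positivity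
    linarith
  have hfinal : (9/4)*(γ*σ2/mr) = (9/4)*γ*σ2/mr := by ring
  linarith [hstep2, hfin, hσdiv, hcoef]

end Chunk2
section Final

set_option maxHeartbeats 2000000 in
lemma aux_final (γ tr Kr mrr Tr L σ2 SG gK2 fK f0 fstar Sfull Slast : ℝ)
    (hγ0 : 0 < γ) (hL : 0 < L) (hτr : 1 ≤ tr) (hσ0 : 0 ≤ σ2) (hSG0 : 0 ≤ SG)
    (hgK20 : 0 ≤ gK2) (hmr1 : 1 ≤ mrr) (hmrτ : mrr ≤ tr) (hKr0 : 0 ≤ Kr)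
    (hT0 : 0 ≤ Tr) (hA7 : Kr*tr + mrr = Tr+1) (hKrtr : Kr*tr ≤ Tr)
    (h13τ : L*γ*tr ≤ 1/13) (hinvτ : 1/tr^2 ≤ 768*L^2*γ^2)
    (hfull : Sfull ≤ (128/63)*(tr*SG) + (128/21)*(L^2*γ^2*σ2)*(Kr*tr))
    (hlast : Slast ≤ (128/63)*(mrr*gK2) + (128/21)*(L^2*γ^2*σ2)*mrr)
    (hA1 : fK + (3/5)*γ*tr*SG ≤ f0 + (9/4)*γ*σ2/tr*Kr)
    (hA2 : fstar ≤ fK) (hA3 : gK2 ≤ 2*L*(fK - fstar)) (hF00 : 0 ≤ f0 - fstar) :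
    Sfull + Slast ≤ 4*((f0-fstar)/γ) + 10532*((L^2*γ^2*σ2)*(Tr+1)) := by
  have htr0 : (0:ℝ) < tr := by linarith
  have hD0 : (3/5)*γ*(tr*SG) ≤ (f0 - fstar) + (9/4)*γ*(σ2*Kr/tr) := by
    have h1 : (9/4)*γ*σ2/tr*Kr = (9/4)*γ*(σ2*Kr/tr) := by field_simp
    linarith only [hA1, hA2, h1]
  have hc0 : (0:ℝ) ≤ σ2*Kr/tr := by positivity
  have hD1 : tr*SG ≤ (5/3)*((f0-fstar)/γ) + (15/4)*(σ2*Kr/tr) := by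
    calc tr*SG = (5/(3*γ))*((3/5)*γ*(tr*SG)) := by field_simp
      _ ≤ (5/(3*γ))*((f0-fstar) + (9/4)*γ*(σ2*Kr/tr)) := by
          apply mul_le_mul_of_nonneg_left hD0 (by positivity)
      _ = (5/3)*((f0-fstar)/γ) + (15/4)*(σ2*Kr/tr) := by field_simp; ring
  have hD2 : fK - fstar ≤ (f0-fstar) + (9/4)*γ*(σ2*Kr/tr) := by
    have h1 : (9/4)*γ*σ2/tr*Kr = (9/4)*γ*(σ2*Kr/tr) := by field_simp
    have h2 : 0 ≤ (3/5)*γ*(tr*SG) := by positivity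
    have h3 : (3/5)*γ*tr*SG = (3/5)*γ*(tr*SG) := by ring
    linarith only [hA1, h1, h2, h3, hA2]
  have hA9 : 2*L*tr ≤ (2/13)/γ := by
    rw [le_div_iff₀ hγ0]
    calc 2*L*tr*γ = 2*(L*γ*tr) := by ring
      _ ≤ 2*(1/13) := by linarith
      _ = 2/13 := by norm_num
  have hD3 : mrr*gK2 ≤ (2/13)*((f0-fstar)/γ) + (9/26)*(σ2*Kr/tr) := by
    have e1 : mrr*gK2 ≤ tr*gK2 := mul_le_mul_of_nonneg_right hmrτ hgK20
    have e2 : tr*gK2 ≤ tr*(2*L*(fK - fstar)) := mul_le_mul_of_nonneg_left hA3 (by positivity)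
    have e3 : tr*(2*L*(fK - fstar)) = (2*L*tr)*(fK - fstar) := by ring
    have e4 : (2*L*tr)*(fK - fstar) ≤ ((2/13)/γ)*((f0-fstar) + (9/4)*γ*(σ2*Kr/tr)) := by
      apply mul_le_mul hA9 hD2 (by linarith) (by positivity)
    have e5 : ((2/13)/γ)*((f0-fstar) + (9/4)*γ*(σ2*Kr/tr))
        = (2/13)*((f0-fstar)/γ) + (9/26)*(σ2*Kr/tr) := by field_simp; ring
    linarith only [e1, e2, e3, e4, e5]
  have hc1 : σ2*Kr/tr ≤ 768*((L^2*γ^2*σ2)*(Tr+1)) := by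
    have e2 : Kr/tr = (Kr*tr)*(1/tr^2) := by field_simp
    have e3 : (Kr*tr)*(1/tr^2) ≤ Tr*(1/tr^2) :=
      mul_le_mul_of_nonneg_right hKrtr (by positivity)
    have e4 : Tr*(1/tr^2) ≤ (Tr+1)*(768*L^2*γ^2) := by
      apply mul_le_mul (by linarith) hinvτ (by positivity) (by positivity)
    have e1 : Kr/tr ≤ (Tr+1)*(768*L^2*γ^2) := by rw [e2]; linarith only [e3, e4]
    have e5 : σ2*Kr/tr = σ2*(Kr/tr) := by ring
    rw [e5]
    calc σ2*(Kr/tr) ≤ σ2*((Tr+1)*(768*L^2*γ^2)) := mul_le_mul_of_nonneg_left e1 hσ0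
      _ = 768*((L^2*γ^2*σ2)*(Tr+1)) := by ring
  have b2 : (128/21)*(L^2*γ^2*σ2)*(Kr*tr) + (128/21)*(L^2*γ^2*σ2)*mrr
      = (128/21)*((L^2*γ^2*σ2)*(Tr+1)) := by
    have e : (128/21)*(L^2*γ^2*σ2)*(Kr*tr) + (128/21)*(L^2*γ^2*σ2)*mrr
        = (128/21)*((L^2*γ^2*σ2)*(Kr*tr+mrr)) := by ring
    rw [e, hA7]
  have hZ0 : (0:ℝ) ≤ (L^2*γ^2*σ2)*(Tr+1) := by positivity
  have hW0 : (0:ℝ) ≤ (f0-fstar)/γ := by positivity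
  linarith only [hfull, hlast, hD1, hD3, hc1, b2, hZ0, hW0]

end Final

set_option maxHeartbeats 4000000 in
/-- Main convergence theorem (Theorem 1) with explicit constants:
SGD with arbitrary (deterministic) data ordering on non-convex smooth
finite-sum objectives. -/
theorem stmt_0
    (d n : ℕ) (hd : 1 ≤ d) (hn : 1 ≤ n)
    (L : ℝ) (hL : 0 < L)
    (f' : Fin n → EuclideanSpace ℝ (Fin d) → ℝ)
    (hdiff : ∀ i, Differentiable ℝ (f' i))
    (hlip : ∀ i (x y : EuclideanSpace ℝ (Fin d)),
      ‖gradient (f' i) x - gradient (f' i) y‖ ≤ L * ‖x - y‖)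
    (f : EuclideanSpace ℝ (Fin d) → ℝ)
    (hf : f = fun x => (1 / n : ℝ) * ∑ i, f' i x)
    (γ : ℝ) (hγ0 : 0 < γ) (hγ : γ ≤ 1 / (8 * Real.sqrt 3 * L))
    (T : ℕ)
    (idx : ℕ → Fin n)
    (x : ℕ → EuclideanSpace ℝ (Fin d))
    (hx : ∀ t, x (t + 1) = x t - γ • gradient (f' (idx t)) (x t))
    (τ : ℕ) (hτ : τ = ⌊1 / (8 * Real.sqrt 3 * L * γ)⌋₊)
    (σ2 : ℝ)
    (hσ : ∀ k ≤ T / τ, ∀ j < τ, k * τ + j ≤ T →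
      ∀ y : EuclideanSpace ℝ (Fin d),
      ‖∑ t ∈ Finset.Icc (k * τ) (min (k * τ + j) T),
          (gradient (f' (idx t)) y - gradient f y)‖ ^ 2 ≤ σ2)
    (fstar : ℝ) (hbdd : ∀ y, fstar ≤ f y) (hinf : fstar = ⨅ y, f y) :
    (1 / (T + 1 : ℝ)) * ∑ t ∈ Finset.range (T + 1), ‖gradient f (x t)‖ ^ 2 ≤
      4 * (f (x 0) - fstar) / (γ * (T + 1)) + 10532 * L ^ 2 * γ ^ 2 * σ2 := by
  have hn0 : (0:ℝ) < (n:ℝ) := by exact_mod_cast hn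
  -- differentiability of f
  have hfd : Differentiable ℝ f := by
    rw [hf]
    exact (Differentiable.fun_sum (fun i _ => hdiff i)).const_mul _
  -- gradient of f
  have hgradf : ∀ y, gradient f y = (1/(n:ℝ)) • ∑ i, gradient (f' i) y := by
    intro y
    have hsum : HasFDerivAt (fun z : EuclideanSpace ℝ (Fin d) => ∑ i, f' i z)
        (∑ i, fderiv ℝ (f' i) y) y :=
      HasFDerivAt.fun_sum (fun i _ => (hdiff i y).hasFDerivAt)
    have hmul : HasFDerivAt f ((1/(n:ℝ)) • ∑ i, fderiv ℝ (f' i) y) y := by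
      rw [hf]; exact hsum.const_mul _
    have hgr := hasFDerivAt_iff_hasGradientAt.mp hmul
    rw [hgr.gradient, map_smul, map_sum]
    rfl
  -- Lipschitz gradient of f
  have hGlip : ∀ a b, ‖gradient f a - gradient f b‖ ≤ L * ‖a - b‖ := by
    intro a b
    rw [hgradf a, hgradf b, ← smul_sub, ← Finset.sum_sub_distrib, norm_smul,
      Real.norm_eq_abs, abs_of_pos (by positivity : (0:ℝ) < 1/(n:ℝ))]
    calc (1/(n:ℝ)) * ‖∑ i, (gradient (f' i) a - gradient (f' i) b)‖
        ≤ (1/(n:ℝ)) * ∑ i, ‖gradient (f' i) a - gradient (f' i) b‖ := by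
          apply mul_le_mul_of_nonneg_left (norm_sum_le _ _) (by positivity)
      _ ≤ (1/(n:ℝ)) * ∑ _i : Fin n, L * ‖a - b‖ := by
          apply mul_le_mul_of_nonneg_left (Finset.sum_le_sum fun i _ => hlip i a b)
            (by positivity)
      _ = L * ‖a - b‖ := by
          rw [Finset.sum_const, Finset.card_univ, Fintype.card_fin, nsmul_eq_mul]
          field_simp
  set P : ℕ → EuclideanSpace ℝ (Fin d) → EuclideanSpace ℝ (Fin d) :=
    fun t y => gradient (f' (idx t)) y with hP
  have hPlip : ∀ t (a b : EuclideanSpace ℝ (Fin d)), ‖P t a - P t b‖ ≤ L * ‖a - b‖ :=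
    fun t => hlip (idx t)
  have hx' : ∀ t, x (t+1) = x t - γ • P t (x t) := hx
  -- numeric facts
  have hs3 : (0:ℝ) < Real.sqrt 3 := Real.sqrt_pos.mpr (by norm_num)
  have hsq3 : Real.sqrt 3 ^ 2 = 3 := Real.sq_sqrt (by norm_num)
  have hden : (0:ℝ) < 8*Real.sqrt 3*L := by positivity
  have hγden : (0:ℝ) < 8*Real.sqrt 3*L*γ := by positivity
  have hprod : 8*Real.sqrt 3*L*γ ≤ 1 := by
    have h1 := (le_div_iff₀ hden).mp hγ
    calc 8*Real.sqrt 3*L*γ = γ*(8*Real.sqrt 3*L) := by ring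
      _ ≤ 1 := h1
  set a : ℝ := 1/(8*Real.sqrt 3*L*γ) with ha
  have ha1 : 1 ≤ a := by rw [ha, le_div_iff₀ hγden]; linarith
  have hτfl : τ = ⌊a⌋₊ := hτ
  have hτa : (τ:ℝ) ≤ a := by rw [hτfl]; exact Nat.floor_le (by positivity)
  have hτ1 : 1 ≤ τ := by
    rw [hτfl]
    exact Nat.le_floor (by exact_mod_cast ha1)
  have hτ0 : 0 < τ := hτ1
  have hτr : (1:ℝ) ≤ (τ:ℝ) := by exact_mod_cast hτ1
  have hτrpos : (0:ℝ) < (τ:ℝ) := by linarith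
  have hτlt : a < (τ:ℝ) + 1 := by rw [hτfl]; exact Nat.lt_floor_add_one a
  have hτ2a : a ≤ 2*(τ:ℝ) := by linarith
  have hβ : L*γ*(τ:ℝ) ≤ Real.sqrt 3/24 := by
    have h1 : L*γ*(τ:ℝ) ≤ L*γ*a := mul_le_mul_of_nonneg_left hτa (by positivity)
    have h2 : L*γ*a = 1/(8*Real.sqrt 3) := by
      rw [ha]
      field_simp
    have h3 : 1/(8*Real.sqrt 3) = Real.sqrt 3/24 := by
      rw [div_eq_div_iff (by positivity) (by norm_num)]
      nlinarith [hsq3]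
    linarith
  have h13τ : L*γ*(τ:ℝ) ≤ 1/13 := by
    have hs13 : Real.sqrt 3 ≤ 24/13 := by nlinarith [hsq3, hs3]
    linarith
  have hLγτ0 : (0:ℝ) ≤ L*γ*(τ:ℝ) := by positivity
  have h192τ : L^2*γ^2*(τ:ℝ)^2 ≤ 1/192 := by nlinarith [hβ, hsq3, hLγτ0]
  have hinvτ : 1/(τ:ℝ)^2 ≤ 768*L^2*γ^2 := by
    have h1 : (1:ℝ) ≤ 16*Real.sqrt 3*L*γ*(τ:ℝ) := by
      have h2 : (1:ℝ) = a*(8*Real.sqrt 3*L*γ) := by rw [ha]; field_simp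
      calc (1:ℝ) = a*(8*Real.sqrt 3*L*γ) := h2
        _ ≤ 2*(τ:ℝ)*(8*Real.sqrt 3*L*γ) := mul_le_mul_of_nonneg_right hτ2a (by positivity)
        _ = 16*Real.sqrt 3*L*γ*(τ:ℝ) := by ring
    rw [div_le_iff₀ (by positivity : (0:ℝ) < (τ:ℝ)^2)]
    nlinarith [hsq3, mul_pos (mul_pos hL hγ0) hτrpos, sq_nonneg (L*γ*(τ:ℝ))]
  -- σ2 nonneg
  have hσ0 : 0 ≤ σ2 := by
    have := hσ 0 (Nat.zero_le _) 0 hτ0 (by omega) (x 0)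
    exact le_trans (by positivity) this
  -- window bound in Ico form
  have hW : ∀ k, k ≤ T/τ → ∀ m, m ≤ τ → k*τ + m ≤ T+1 →
      ∀ y : EuclideanSpace ℝ (Fin d),
      ‖∑ t ∈ Finset.Ico (k*τ) (k*τ+m), (P t y - gradient f y)‖^2 ≤ σ2 := by
    intro k hk m hm hkm y
    match m, hm, hkm with
    | 0, _, _ => simpa using hσ0
    | (j+1), hm, hkm =>
      have hj : j < τ := by omega
      have hkj : k*τ + j ≤ T := by omega
      have h1 := hσ k hk j hj hkj y
      rw [min_eq_left hkj, ← Finset.Ico_add_one_right_eq_Icc] at h1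
      have e : k*τ + (j+1) = (k*τ+j)+1 := by omega
      rw [e]
      exact h1
  -- chunk structure
  set K := T / τ with hK
  have hKτ : K*τ ≤ T := Nat.div_mul_le_self T τ
  have hmodlt : T % τ < τ := Nat.mod_lt T hτ0
  have hmod2 : K * τ + T % τ = T := by rw [hK, Nat.mul_comm]; exact Nat.div_add_mod T τ
  set m0 := T + 1 - K*τ with hm0def
  have hm01 : 1 ≤ m0 := by rw [hm0def]; omega
  have hm0τ : m0 ≤ τ := by rw [hm0def]; omega
  have hKm : K*τ + m0 = T+1 := by rw [hm0def]; omega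
  -- window specializations for chunks
  have hwinS : ∀ k ≤ K, ∀ mc ≤ τ, k*τ + mc ≤ T+1 →
      ∀ t ∈ Finset.Ico (k*τ) (k*τ+mc),
      ‖∑ r ∈ Finset.Ico (k*τ) t, (P r (x (k*τ)) - gradient f (x (k*τ)))‖^2 ≤ σ2 := by
    intro k hk mc hmc hkmc t ht
    rw [Finset.mem_Ico] at ht
    have h1 := hW k hk (t - k*τ) (by omega) (by omega) (x (k*τ))
    have e : k*τ + (t - k*τ) = t := by omega
    rw [e] at h1
    exact h1
  -- per-chunk gradient sum bound
  have hchunk : ∀ k ≤ K, ∀ mc, 1 ≤ mc → mc ≤ τ → k*τ + mc ≤ T+1 →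
      ∑ t ∈ Finset.Ico (k*τ) (k*τ+mc), ‖gradient f (x t)‖^2
        ≤ (128/63)*(mc:ℝ)*‖gradient f (x (k*τ))‖^2 + (128/21)*L^2*γ^2*(mc:ℝ)*σ2 := by
    intro k hk mc _ hmc hkmc
    apply aux_chunk_grads hL hγ0 P x hx' hPlip (gradient f) hGlip (k*τ) mc σ2 hσ0
      (hwinS k hk mc hmc hkmc)
    have hmcr : (mc:ℝ) ≤ (τ:ℝ) := by exact_mod_cast hmc
    have h1 : (mc:ℝ)^2 ≤ (τ:ℝ)^2 := by nlinarith [Nat.cast_nonneg (α := ℝ) mc]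
    have h2 : L^2*γ^2*(mc:ℝ)^2 ≤ L^2*γ^2*(τ:ℝ)^2 :=
      mul_le_mul_of_nonneg_left h1 (by positivity)
    linarith
  -- telescoped descent over full chunks
  have htel : ∀ k, k ≤ K →
      f (x (k*τ)) + (3/5)*γ*(τ:ℝ)*(∑ j ∈ Finset.range k, ‖gradient f (x (j*τ))‖^2)
        ≤ f (x 0) + (9/4)*γ*σ2/(τ:ℝ)*(k:ℝ) := by
    intro k
    induction k with
    | zero => intro _; simp
    | succ k ih =>
      intro hk1
      have hk : k ≤ K := by omega
      have hkK : k < K := by omega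
      have hfullle : k*τ + τ ≤ T+1 := by
        have h2 : k*τ + τ ≤ K*τ := by
          calc k*τ + τ = (k+1)*τ := by ring
            _ ≤ K*τ := Nat.mul_le_mul_right τ hk1
        exact le_trans h2 (le_trans hKτ (Nat.le_succ T))
      have hd := aux_chunk_descent hL hγ0 P x hx' hPlip f hfd hGlip (k*τ) τ hτ1 σ2 hσ0
        (hwinS k hk τ le_rfl hfullle)
        (hW k hk τ le_rfl hfullle (x (k*τ)))
        h13τ h192τ
      have e : k*τ+τ = (k+1)*τ := by ring
      rw [e] at hd
      have ih' := ih hk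
      rw [Finset.sum_range_succ]
      push_cast
      push_cast at ih'
      linarith
  -- decomposition of the sum
  have hdecomp : ∀ N : ℕ, ∑ t ∈ Finset.range (N*τ), ‖gradient f (x t)‖^2
      = ∑ k ∈ Finset.range N, ∑ t ∈ Finset.Ico (k*τ) (k*τ+τ), ‖gradient f (x t)‖^2 := by
    intro N
    induction N with
    | zero => simp
    | succ N ih =>
      have e : (N+1)*τ = N*τ + τ := by ring
      calc ∑ t ∈ Finset.range ((N+1)*τ), ‖gradient f (x t)‖^2
          = (∑ t ∈ Finset.range (N*τ), ‖gradient f (x t)‖^2)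
              + ∑ t ∈ Finset.Ico (N*τ) (N*τ+τ), ‖gradient f (x t)‖^2 := by
            rw [e]
            simp only [Finset.range_eq_Ico]
            exact (Finset.sum_Ico_consecutive _ (Nat.zero_le (N*τ))
              (Nat.le_add_right (N*τ) τ)).symm
        _ = ∑ k ∈ Finset.range (N+1), ∑ t ∈ Finset.Ico (k*τ) (k*τ+τ),
              ‖gradient f (x t)‖^2 := by
            rw [Finset.sum_range_succ, ih]
  have hsplit : ∑ t ∈ Finset.range (T+1), ‖gradient f (x t)‖^2
      = (∑ k ∈ Finset.range K, ∑ t ∈ Finset.Ico (k*τ) (k*τ+τ), ‖gradient f (x t)‖^2)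
        + ∑ t ∈ Finset.Ico (K*τ) (K*τ+m0), ‖gradient f (x t)‖^2 := by
    rw [← hdecomp K, show T+1 = K*τ+m0 from hKm.symm]
    simp only [Finset.range_eq_Ico]
    exact (Finset.sum_Ico_consecutive _ (Nat.zero_le (K*τ)) (Nat.le_add_right (K*τ) m0)).symm
  -- cast facts
  have hmr1 : (1:ℝ) ≤ (m0:ℝ) := by exact_mod_cast hm01
  have hmrτ : (m0:ℝ) ≤ (τ:ℝ) := by exact_mod_cast hm0τ
  have hKr0 : (0:ℝ) ≤ (K:ℝ) := by positivity
  have hA7 : (K:ℝ)*(τ:ℝ) + (m0:ℝ) = (T:ℝ)+1 := by exact_mod_cast hKm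
  have hKrtr : (K:ℝ)*(τ:ℝ) ≤ (T:ℝ) := by exact_mod_cast hKτ
  -- full chunks bound
  have hfull : ∑ k ∈ Finset.range K, ∑ t ∈ Finset.Ico (k*τ) (k*τ+τ), ‖gradient f (x t)‖^2
      ≤ (128/63)*((τ:ℝ)*∑ j ∈ Finset.range K, ‖gradient f (x (j*τ))‖^2)
        + (128/21)*(L^2*γ^2*σ2)*((K:ℝ)*(τ:ℝ)) := by
    calc ∑ k ∈ Finset.range K, ∑ t ∈ Finset.Ico (k*τ) (k*τ+τ), ‖gradient f (x t)‖^2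
        ≤ ∑ k ∈ Finset.range K,
            ((128/63)*(τ:ℝ)*‖gradient f (x (k*τ))‖^2 + (128/21)*L^2*γ^2*(τ:ℝ)*σ2) := by
          apply Finset.sum_le_sum
          intro k hk
          rw [Finset.mem_range] at hk
          have hfullle : k*τ + τ ≤ T+1 := by
            have h2 : k*τ + τ ≤ K*τ := by
              calc k*τ + τ = (k+1)*τ := by ring
                _ ≤ K*τ := Nat.mul_le_mul_right τ hk
            exact le_trans h2 (le_trans hKτ (Nat.le_succ T))
          exact hchunk k (le_of_lt hk) τ hτ1 le_rfl hfullle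
      _ = (128/63)*((τ:ℝ)*∑ j ∈ Finset.range K, ‖gradient f (x (j*τ))‖^2)
            + (128/21)*(L^2*γ^2*σ2)*((K:ℝ)*(τ:ℝ)) := by
          rw [Finset.sum_add_distrib, Finset.sum_const, ← Finset.mul_sum, Finset.card_range,
            nsmul_eq_mul]
          ring
  -- last chunk bound
  have hlastle : K*τ + m0 ≤ T+1 := le_of_eq hKm
  have hlast : ∑ t ∈ Finset.Ico (K*τ) (K*τ+m0), ‖gradient f (x t)‖^2
      ≤ (128/63)*((m0:ℝ)*‖gradient f (x (K*τ))‖^2) + (128/21)*(L^2*γ^2*σ2)*(m0:ℝ) := by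
    have h1 := hchunk K le_rfl m0 hm01 hm0τ hlastle
    calc ∑ t ∈ Finset.Ico (K*τ) (K*τ+m0), ‖gradient f (x t)‖^2
        ≤ (128/63)*(m0:ℝ)*‖gradient f (x (K*τ))‖^2 + (128/21)*L^2*γ^2*(m0:ℝ)*σ2 := h1
      _ = (128/63)*((m0:ℝ)*‖gradient f (x (K*τ))‖^2) + (128/21)*(L^2*γ^2*σ2)*(m0:ℝ) := by
          ring
  -- telescope at K and final assembly
  have hA1 := htel K le_rfl
  have hA2 : fstar ≤ f (x (K*τ)) := hbdd _
  have hA3 : ‖gradient f (x (K*τ))‖^2 ≤ 2*L*(f (x (K*τ)) - fstar) :=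
    aux_gradsq f hfd hL hGlip hbdd _
  have hF00 : 0 ≤ f (x 0) - fstar := by linarith [hbdd (x 0)]
  have hSG0 : 0 ≤ ∑ j ∈ Finset.range K, ‖gradient f (x (j*τ))‖^2 :=
    Finset.sum_nonneg fun j _ => by positivity
  have hgK20 : (0:ℝ) ≤ ‖gradient f (x (K*τ))‖^2 := by positivity
  have hT0 : (0:ℝ) ≤ (T:ℝ) := by positivity
  have hSig := aux_final γ (τ:ℝ) (K:ℝ) (m0:ℝ) (T:ℝ) L σ2
    (∑ j ∈ Finset.range K, ‖gradient f (x (j*τ))‖^2)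
    (‖gradient f (x (K*τ))‖^2) (f (x (K*τ))) (f (x 0)) fstar
    (∑ k ∈ Finset.range K, ∑ t ∈ Finset.Ico (k*τ) (k*τ+τ), ‖gradient f (x t)‖^2)
    (∑ t ∈ Finset.Ico (K*τ) (K*τ+m0), ‖gradient f (x t)‖^2)
    hγ0 hL hτr hσ0 hSG0 hgK20 hmr1 hmrτ hKr0 hT0 hA7 hKrtr h13τ hinvτ
    hfull hlast hA1 hA2 hA3 hF00
  have hSig2 : ∑ t ∈ Finset.range (T+1), ‖gradient f (x t)‖^2
      ≤ 4*((f (x 0) - fstar)/γ) + 10532*((L^2*γ^2*σ2)*((T:ℝ)+1)) := by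
    rw [hsplit]
    exact hSig
  calc (1/((T:ℝ)+1)) * ∑ t ∈ Finset.range (T+1), ‖gradient f (x t)‖^2
      ≤ (1/((T:ℝ)+1)) * (4*((f (x 0) - fstar)/γ) + 10532*((L^2*γ^2*σ2)*((T:ℝ)+1))) := by
        apply mul_le_mul_of_nonneg_left hSig2 (by positivity)
    _ = 4*(f (x 0) - fstar)/(γ*((T:ℝ)+1)) + 10532*L^2*γ^2*σ2 := by
        have hT1 : ((T:ℝ)+1) ≠ 0 := by positivity
        have hγne : γ ≠ 0 := ne_of_gt hγ0
        field_simp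
end

section
/- Let (x_t) be the iterates x_{t+1} = x_t − γ∇f_{i_t}(x_t), let τ ≥ 1 be an integer with γ·L·τ ≤ 1/(8√3), and for 0 ≤ t ≤ T let r(t) = ⌊t/τ⌋·τ and φ_j(x) = ‖∑_{l=r(t)}^{j} (∇f(x) − ∇f_{i_l}(x))‖² for r(t) ≤ j ≤ t. Then for every 0 ≤ t ≤ T, ‖∑_{j=r(t)}^{t} (∇f(x_j) − ∇f_{i_j}(x_j))‖² ≤ 3·φ_t(x_{r(t)}) + 48·γ²·L²·τ·∑_{j=r(t)}^{t} φ_j(x_{r(t)}) + 16·γ²·τ³·L²·∑_{j=r(t)}^{t} ‖∇f(x_j)‖². -/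
/-
The deviation `D_j = ∑_{l<j} (∇f(x_l) - ∇f_{i_l}(x_l))` over a block differs from the same sum
frozen at the block start `x_r` by at most `2L ∑ ‖x_l - x_r‖`, and each displacement `x_l - x_r`
is `γ` times the sum of the stochastic gradients used so far, i.e. of full gradients minus an
earlier deviation `D_l`. This yields a recursive inequality bounding `‖D_j‖²` by the frozen
deviation, `γ²L²τ ∑_{l<j} ‖D_l‖²` and `γ²L²τ³ ∑ ‖∇f(x_l)‖²`; when `γ²L²τ² ≤ 1/48`, strong
induction on `j` closes it.
-/

open Finset

section NormInequalities

variable {E : Type*} [NormedAddCommGroup E]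

lemma norm_add_sq_le_of_pos {ε : ℝ} (hε : 0 < ε) (a b : E) :
    ‖a + b‖ ^ 2 ≤ (1 + ε) * ‖a‖ ^ 2 + (1 + ε⁻¹) * ‖b‖ ^ 2 := by
  have hab : ‖a + b‖ ^ 2 ≤ (‖a‖ + ‖b‖) ^ 2 :=
    pow_le_pow_left₀ (norm_nonneg _) (norm_add_le a b) 2
  have hyoung : 0 ≤ (ε * ‖a‖ - ‖b‖) ^ 2 / ε := by positivity
  have hexpand : (1 + ε) * ‖a‖ ^ 2 + (1 + ε⁻¹) * ‖b‖ ^ 2 - (‖a‖ + ‖b‖) ^ 2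
      = (ε * ‖a‖ - ‖b‖) ^ 2 / ε := by
    field_simp
    ring
  linarith

lemma norm_sum_sq_le_card_mul {ι : Type*} (s : Finset ι) (v : ι → E) :
    ‖∑ i ∈ s, v i‖ ^ 2 ≤ #s * ∑ i ∈ s, ‖v i‖ ^ 2 :=
  (pow_le_pow_left₀ (norm_nonneg _) (norm_sum_le _ _) 2).trans sq_sum_le_card_mul_sum_sq

lemma norm_sum_Ico_sq_le {v : ℕ → E} {r l j τ : ℕ} (hlj : l ≤ j) (hjτ : j ≤ r + τ) :
    ‖∑ m ∈ Ico r l, v m‖ ^ 2 ≤ τ * ∑ m ∈ Ico r j, ‖v m‖ ^ 2 := by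
  refine (norm_sum_sq_le_card_mul _ _).trans (mul_le_mul ?_ ?_ (by positivity) (by positivity))
  · rw [Nat.card_Ico]
    exact_mod_cast (by omega : l - r ≤ τ)
  · exact sum_le_sum_of_subset_of_nonneg (Ico_subset_Ico_right hlj) fun _ _ _ => by positivity

end NormInequalities

lemma sum_Ico_le_sum_Ico_succ {h : ℕ → ℝ} {r j : ℕ} (hr : h r = 0) (h0 : 0 ≤ h j)
    (hrj : r ≤ j) : ∑ m ∈ Ico r j, h m ≤ ∑ m ∈ Ico r j, h (m + 1) := by
  have htel : ∑ m ∈ Ico r j, (h (m + 1) - h m) = h j - h r := sum_Ico_sub h hrj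
  rw [sum_sub_distrib] at htel
  linarith

section Gradients

variable {F : Type*} [NormedAddCommGroup F] [InnerProductSpace ℝ F] [CompleteSpace F]

lemma gradient_const_mul_sum {ι : Type*} [Fintype ι] {f : ι → F → ℝ} {y : F}
    (hf : ∀ i, DifferentiableAt ℝ (f i) y) (c : ℝ) :
    gradient (fun z => c * ∑ i, f i z) y = c • ∑ i, gradient (f i) y := by
  have hsum : DifferentiableAt ℝ (fun z => ∑ i, f i z) y :=
    DifferentiableAt.fun_sum fun i _ => hf i
  unfold gradient
  rw [fderiv_const_mul hsum c, fderiv_fun_sum fun i _ => hf i]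
  simp only [map_smul, map_sum]

end Gradients

lemma norm_average_sub_le {E : Type*} [NormedAddCommGroup E] [NormedSpace ℝ E] {n : ℕ}
    (hn : 0 < n) {L : ℝ} {g : Fin n → E → E} (hg : ∀ i y z, ‖g i y - g i z‖ ≤ L * ‖y - z‖)
    (y z : E) :
    ‖(1 / n : ℝ) • ∑ i, g i y - (1 / n : ℝ) • ∑ i, g i z‖ ≤ L * ‖y - z‖ := by
  have hn' : (0 : ℝ) < n := by exact_mod_cast hn
  rw [← smul_sub, ← sum_sub_distrib, norm_smul, Real.norm_eq_abs, abs_of_pos (by positivity)]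
  calc (1 / n : ℝ) * ‖∑ i, (g i y - g i z)‖
      ≤ (1 / n : ℝ) * ∑ _i : Fin n, L * ‖y - z‖ :=
        mul_le_mul_of_nonneg_left ((norm_sum_le _ _).trans (sum_le_sum fun i _ => hg i y z))
          (by positivity)
    _ = L * ‖y - z‖ := by
        rw [sum_const, card_univ, Fintype.card_fin, nsmul_eq_mul]
        field_simp

section StochasticGradientBlock

variable {E : Type*} [NormedAddCommGroup E]

/-- With `z` constant equal to `y`, `‖noiseSum G g z r (j + 1)‖ ^ 2` is the paper's `φ_j(y)`. -/
def noiseSum (G : E → E) (g : ℕ → E → E) (z : ℕ → E) (r j : ℕ) : E :=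
  ∑ l ∈ Ico r j, (G (z l) - g l (z l))

variable (G : E → E) (g : ℕ → E → E) {L γ : ℝ} {x : ℕ → E} {r j τ : ℕ}

lemma norm_noiseSum_sub_const_sq_le (hG : ∀ y z, ‖G y - G z‖ ≤ L * ‖y - z‖)
    (hg : ∀ l y z, ‖g l y - g l z‖ ≤ L * ‖y - z‖) (hjτ : j ≤ r + τ) :
    ‖noiseSum G g x r j - noiseSum G g (fun _ => x r) r j‖ ^ 2 ≤
      4 * L ^ 2 * τ * ∑ l ∈ Ico r j, ‖x l - x r‖ ^ 2 := by
  have hterm : ∀ l, ‖(G (x l) - g l (x l)) - (G (x r) - g l (x r))‖ ^ 2 ≤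
      4 * L ^ 2 * ‖x l - x r‖ ^ 2 := by
    intro l
    have hle : ‖(G (x l) - g l (x l)) - (G (x r) - g l (x r))‖ ≤ 2 * L * ‖x l - x r‖ :=
      calc ‖(G (x l) - g l (x l)) - (G (x r) - g l (x r))‖
          = ‖(G (x l) - G (x r)) - (g l (x l) - g l (x r))‖ := by congr 1; abel
        _ ≤ ‖G (x l) - G (x r)‖ + ‖g l (x l) - g l (x r)‖ := norm_sub_le _ _
        _ ≤ 2 * L * ‖x l - x r‖ := by linarith [hG (x l) (x r), hg l (x l) (x r)]
    nlinarith [pow_le_pow_left₀ (norm_nonneg _) hle 2]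
  rw [noiseSum, noiseSum, ← sum_sub_distrib]
  calc _ ≤ τ * ∑ l ∈ Ico r j, ‖(G (x l) - g l (x l)) - (G (x r) - g l (x r))‖ ^ 2 :=
        norm_sum_Ico_sq_le le_rfl hjτ
    _ ≤ τ * ∑ l ∈ Ico r j, 4 * L ^ 2 * ‖x l - x r‖ ^ 2 := by gcongr with l; exact hterm l
    _ = _ := by rw [← mul_sum]; ring

variable [NormedSpace ℝ E]

lemma sub_eq_neg_smul_sum_of_iterate (hx : ∀ t, x (t + 1) = x t - γ • g t (x t))
    (hrj : r ≤ j) : x j - x r = -(γ • ∑ l ∈ Ico r j, g l (x l)) := by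
  rw [← sum_Ico_sub x hrj, smul_sum, ← sum_neg_distrib]
  refine sum_congr rfl fun l _ => ?_
  rw [hx]
  abel

lemma norm_sub_sq_le_of_iterate (hx : ∀ t, x (t + 1) = x t - γ • g t (x t)) (hrj : r ≤ j) :
    ‖x j - x r‖ ^ 2 ≤
      2 * γ ^ 2 * ‖∑ l ∈ Ico r j, G (x l)‖ ^ 2 + 2 * γ ^ 2 * ‖noiseSum G g x r j‖ ^ 2 := by
  have hsplit : ∑ l ∈ Ico r j, g l (x l) = ∑ l ∈ Ico r j, G (x l) + -noiseSum G g x r j := by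
    simp only [noiseSum, sum_sub_distrib]
    abel
  have hyoung := norm_add_sq_le_of_pos one_pos (∑ l ∈ Ico r j, G (x l)) (-noiseSum G g x r j)
  rw [norm_neg] at hyoung
  rw [sub_eq_neg_smul_sum_of_iterate g hx hrj, norm_neg, norm_smul, mul_pow, Real.norm_eq_abs,
    sq_abs, hsplit]
  nlinarith [sq_nonneg γ]

lemma norm_noiseSum_sq_le_rec (hG : ∀ y z, ‖G y - G z‖ ≤ L * ‖y - z‖)
    (hg : ∀ l y z, ‖g l y - g l z‖ ≤ L * ‖y - z‖) (hx : ∀ t, x (t + 1) = x t - γ • g t (x t))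
    (hjτ : j ≤ r + τ) :
    ‖noiseSum G g x r j‖ ^ 2 ≤
      3 * ‖noiseSum G g (fun _ => x r) r j‖ ^ 2 +
        12 * γ ^ 2 * L ^ 2 * τ * ∑ m ∈ Ico r j, ‖noiseSum G g x r m‖ ^ 2 +
        12 * γ ^ 2 * L ^ 2 * τ ^ 3 * ∑ m ∈ Ico r j, ‖G (x m)‖ ^ 2 := by
  set D := noiseSum G g x r j
  set Φ := noiseSum G g (fun _ => x r) r j
  have hfrozen : ‖D‖ ^ 2 ≤ 3 * ‖Φ‖ ^ 2 + 3 / 2 * ‖D - Φ‖ ^ 2 := by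
    have := norm_add_sq_le_of_pos two_pos Φ (D - Φ)
    rw [add_sub_cancel] at this
    linarith
  have hdrift := norm_noiseSum_sub_const_sq_le G g (x := x) hG hg hjτ
  have hdisp : ∑ m ∈ Ico r j, ‖x m - x r‖ ^ 2 ≤
      2 * γ ^ 2 * ∑ m ∈ Ico r j, ‖noiseSum G g x r m‖ ^ 2 +
        2 * γ ^ 2 * τ ^ 2 * ∑ m ∈ Ico r j, ‖G (x m)‖ ^ 2 :=
    calc ∑ m ∈ Ico r j, ‖x m - x r‖ ^ 2
        ≤ ∑ m ∈ Ico r j, (2 * γ ^ 2 * ‖noiseSum G g x r m‖ ^ 2 +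
            2 * γ ^ 2 * (τ * ∑ m ∈ Ico r j, ‖G (x m)‖ ^ 2)) := by
          refine sum_le_sum fun m hm => ?_
          obtain ⟨hrm, hmj⟩ := mem_Ico.mp hm
          have hG_sum := mul_le_mul_of_nonneg_left
            (norm_sum_Ico_sq_le (v := fun l => G (x l)) hmj.le hjτ) (by positivity : 0 ≤ 2 * γ ^ 2)
          linarith [norm_sub_sq_le_of_iterate G g hx hrm]
      _ ≤ _ := by
          rw [sum_add_distrib, sum_const, nsmul_eq_mul, ← mul_sum, Nat.card_Ico]
          have hcard : ((j - r : ℕ) : ℝ) ≤ τ := by exact_mod_cast (by omega : j - r ≤ τ)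
          nlinarith [mul_le_mul_of_nonneg_right hcard
            (by positivity : 0 ≤ 2 * γ ^ 2 * (τ * ∑ m ∈ Ico r j, ‖G (x m)‖ ^ 2))]
  linarith [mul_le_mul_of_nonneg_left hdisp (by positivity : (0 : ℝ) ≤ 6 * L ^ 2 * τ)]

lemma norm_noiseSum_sq_le (hG : ∀ y z, ‖G y - G z‖ ≤ L * ‖y - z‖)
    (hg : ∀ l y z, ‖g l y - g l z‖ ≤ L * ‖y - z‖) (hx : ∀ t, x (t + 1) = x t - γ • g t (x t))
    (hc : γ ^ 2 * L ^ 2 * τ ^ 2 ≤ 1 / 48) (hrj : r ≤ j) (hjτ : j ≤ r + τ) :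
    ‖noiseSum G g x r j‖ ^ 2 ≤
      3 * ‖noiseSum G g (fun _ => x r) r j‖ ^ 2 +
        48 * γ ^ 2 * L ^ 2 * τ * ∑ m ∈ Ico r j, ‖noiseSum G g (fun _ => x r) r (m + 1)‖ ^ 2 +
        16 * γ ^ 2 * τ ^ 3 * L ^ 2 * ∑ m ∈ Ico r j, ‖G (x m)‖ ^ 2 := by
  induction j using Nat.strong_induction_on with
  | _ j IH =>
  set Φ := noiseSum G g (fun _ => x r) r
  set S := ∑ m ∈ Ico r j, ‖Φ (m + 1)‖ ^ 2
  set Gs := ∑ m ∈ Ico r j, ‖G (x m)‖ ^ 2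
  set C := 48 * γ ^ 2 * L ^ 2 * τ * S + 16 * γ ^ 2 * τ ^ 3 * L ^ 2 * Gs
  have hearlier : ∀ m ∈ Ico r j, ‖noiseSum G g x r m‖ ^ 2 ≤ 3 * ‖Φ m‖ ^ 2 + C := by
    intro m hm
    obtain ⟨hrm, hmj⟩ := mem_Ico.mp hm
    have hsub := Ico_subset_Ico_right (a := r) hmj.le
    have hS := mul_le_mul_of_nonneg_left
      (sum_le_sum_of_subset_of_nonneg hsub fun k _ _ => sq_nonneg ‖Φ (k + 1)‖)
      (by positivity : (0 : ℝ) ≤ 48 * γ ^ 2 * L ^ 2 * τ)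
    have hGs := mul_le_mul_of_nonneg_left
      (sum_le_sum_of_subset_of_nonneg hsub fun k _ _ => sq_nonneg ‖G (x k)‖)
      (by positivity : (0 : ℝ) ≤ 16 * γ ^ 2 * τ ^ 3 * L ^ 2)
    linarith [IH m hmj hrm (by omega)]
  have hshift : ∑ m ∈ Ico r j, ‖Φ m‖ ^ 2 ≤ S :=
    sum_Ico_le_sum_Ico_succ (h := fun m => ‖Φ m‖ ^ 2) (by simp [Φ, noiseSum]) (by positivity) hrj
  have hC : 0 ≤ C := by positivity
  have hsum : ∑ m ∈ Ico r j, ‖noiseSum G g x r m‖ ^ 2 ≤ 3 * S + τ * C :=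
    calc ∑ m ∈ Ico r j, ‖noiseSum G g x r m‖ ^ 2
        ≤ ∑ m ∈ Ico r j, (3 * ‖Φ m‖ ^ 2 + C) := sum_le_sum hearlier
      _ = 3 * ∑ m ∈ Ico r j, ‖Φ m‖ ^ 2 + (j - r : ℕ) * C := by
          rw [sum_add_distrib, sum_const, ← mul_sum, Nat.card_Ico, nsmul_eq_mul]
      _ ≤ 3 * S + τ * C := by
          gcongr
          exact_mod_cast (by omega : j - r ≤ τ)
  have hrec := norm_noiseSum_sq_le_rec G g hG hg hx hjτ
  -- `γ²L²τ² ≤ 1/48` is exactly what absorbs the recursive terms into the constants 48 and 16.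
  have hS := mul_le_mul_of_nonneg_left hc (by positivity : (0 : ℝ) ≤ 576 * γ ^ 2 * L ^ 2 * τ * S)
  have hGs := mul_le_mul_of_nonneg_left hc
    (by positivity : (0 : ℝ) ≤ 192 * γ ^ 2 * L ^ 2 * τ ^ 3 * Gs)
  linarith [mul_le_mul_of_nonneg_left hsum (by positivity : (0 : ℝ) ≤ 12 * γ ^ 2 * L ^ 2 * τ)]

end StochasticGradientBlock

theorem stmt_1_general
    (d n : ℕ)
    (L : ℝ) (hL : 0 < L)
    (f' : Fin n → EuclideanSpace ℝ (Fin d) → ℝ)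
    (hdiff : ∀ i, Differentiable ℝ (f' i))
    (hlip : ∀ i (x y : EuclideanSpace ℝ (Fin d)),
      ‖gradient (f' i) x - gradient (f' i) y‖ ≤ L * ‖x - y‖)
    (f : EuclideanSpace ℝ (Fin d) → ℝ)
    (hf : f = fun x => (1 / n : ℝ) * ∑ i, f' i x)
    (γ : ℝ) (hγ0 : 0 < γ)
    (T : ℕ)
    (idx : ℕ → Fin n)
    (x : ℕ → EuclideanSpace ℝ (Fin d))
    (hx : ∀ t, x (t + 1) = x t - γ • gradient (f' (idx t)) (x t))
    (τ : ℕ) (hτ1 : 1 ≤ τ) (hγτ : γ * L * τ ≤ 1 / (8 * Real.sqrt 3)) :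
    ∀ t ≤ T,
      ‖∑ j ∈ Finset.Icc (t / τ * τ) t,
          (gradient f (x j) - gradient (f' (idx j)) (x j))‖ ^ 2 ≤
        3 * ‖∑ l ∈ Finset.Icc (t / τ * τ) t,
              (gradient f (x (t / τ * τ)) -
                gradient (f' (idx l)) (x (t / τ * τ)))‖ ^ 2 +
        48 * γ ^ 2 * L ^ 2 * τ *
          ∑ j ∈ Finset.Icc (t / τ * τ) t,
            ‖∑ l ∈ Finset.Icc (t / τ * τ) j,
              (gradient f (x (t / τ * τ)) -
                gradient (f' (idx l)) (x (t / τ * τ)))‖ ^ 2 +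
        16 * γ ^ 2 * τ ^ 3 * L ^ 2 *
          ∑ j ∈ Finset.Icc (t / τ * τ) t, ‖gradient f (x j)‖ ^ 2 := by
  intro t _
  have hgradf : ∀ y, gradient f y = (1 / n : ℝ) • ∑ i, gradient (f' i) y := fun y => by
    rw [hf]
    exact gradient_const_mul_sum (fun i => (hdiff i).differentiableAt) _
  have hlipf : ∀ y z, ‖gradient f y - gradient f z‖ ≤ L * ‖y - z‖ := fun y z => by
    simpa only [hgradf] using norm_average_sub_le (idx 0).pos hlip y z
  have hc : γ ^ 2 * L ^ 2 * τ ^ 2 ≤ 1 / 48 :=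
    calc γ ^ 2 * L ^ 2 * τ ^ 2 = (γ * L * τ) ^ 2 := by ring
      _ ≤ (1 / (8 * Real.sqrt 3)) ^ 2 := pow_le_pow_left₀ (by positivity) hγτ 2
      _ = 1 / 192 := by rw [div_pow, mul_pow, Real.sq_sqrt (by norm_num)]; norm_num
      _ ≤ 1 / 48 := by norm_num
  have hblock := norm_noiseSum_sq_le (gradient f) (fun l => gradient (f' (idx l))) hlipf
    (fun l => hlip (idx l)) hx hc ((Nat.div_mul_le_self t τ).trans (Nat.le_add_right t 1))
    (Nat.lt_div_mul_add hτ1)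
  simpa only [noiseSum, ← Ico_add_one_right_eq_Icc] using hblock

/-- Main Lemma (Lemma 1, eq. (13)): bound on the accumulated deviation between
stochastic and full gradients over one correlated period. Here `r t = (t / τ) * τ`
(with natural division) and `φ j y = ‖∑_{l = r t}^{j} (∇f y - ∇f_{i_l} y)‖²`. -/
theorem stmt_1
    (d n : ℕ) (hd : 1 ≤ d) (hn : 1 ≤ n)
    (L : ℝ) (hL : 0 < L)
    (f' : Fin n → EuclideanSpace ℝ (Fin d) → ℝ)
    (hdiff : ∀ i, Differentiable ℝ (f' i))
    (hlip : ∀ i (x y : EuclideanSpace ℝ (Fin d)),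
      ‖gradient (f' i) x - gradient (f' i) y‖ ≤ L * ‖x - y‖)
    (f : EuclideanSpace ℝ (Fin d) → ℝ)
    (hf : f = fun x => (1 / n : ℝ) * ∑ i, f' i x)
    (γ : ℝ) (hγ0 : 0 < γ)
    (T : ℕ)
    (idx : ℕ → Fin n)
    (x : ℕ → EuclideanSpace ℝ (Fin d))
    (hx : ∀ t, x (t + 1) = x t - γ • gradient (f' (idx t)) (x t))
    (τ : ℕ) (hτ1 : 1 ≤ τ) (hγτ : γ * L * τ ≤ 1 / (8 * Real.sqrt 3)) :
    ∀ t ≤ T,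
      ‖∑ j ∈ Finset.Icc (t / τ * τ) t,
          (gradient f (x j) - gradient (f' (idx j)) (x j))‖ ^ 2 ≤
        3 * ‖∑ l ∈ Finset.Icc (t / τ * τ) t,
              (gradient f (x (t / τ * τ)) -
                gradient (f' (idx l)) (x (t / τ * τ)))‖ ^ 2 +
        48 * γ ^ 2 * L ^ 2 * τ *
          ∑ j ∈ Finset.Icc (t / τ * τ) t,
            ‖∑ l ∈ Finset.Icc (t / τ * τ) j,
              (gradient f (x (t / τ * τ)) -
                gradient (f' (idx l)) (x (t / τ * τ)))‖ ^ 2 +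
        16 * γ ^ 2 * τ ^ 3 * L ^ 2 *
          ∑ j ∈ Finset.Icc (t / τ * τ) t, ‖gradient f (x j)‖ ^ 2 :=
  stmt_1_general d n L hL f' hdiff hlip f hf γ hγ0 T idx x hx τ hτ1 hγτ
end

section
/- Let (x_t) be the iterates x_{t+1} = x_t − γ∇f_{i_t}(x_t), let τ ≥ 1 be an integer with γ·L·τ ≤ 1/(8√3), fix 0 ≤ t ≤ T, set r = ⌊t/τ⌋·τ, and let φ_j(x) = ‖∑_{l=r}^{j} (∇f(x) − ∇f_{i_l}(x))‖² for r ≤ j ≤ t. Then ∑_{j=r}^{t} ‖x_r − x_j‖² ≤ (32γ²/5)·∑_{j=r}^{t} φ_j(x_r) + (32γ²τ²/15)·∑_{j=r}^{t} ‖∇f(x_j)‖². -/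
open scoped BigOperators

private lemma aux_w3 (p q s : ℝ) :
    (p + q + s) ^ 2 ≤ 16 * p ^ 2 + 64 / 15 * q ^ 2 + 64 / 45 * s ^ 2 := by
  nlinarith [sq_nonneg (4*q - 15*p), sq_nonneg (4*s - 45*p), sq_nonneg (s - 3*q)]

private lemma aux_norm_sum_sq {E : Type*} [SeminormedAddCommGroup E] (s : Finset ℕ) (v : ℕ → E) :
    ‖∑ l ∈ s, v l‖ ^ 2 ≤ (s.card : ℝ) * ∑ l ∈ s, ‖v l‖ ^ 2 := by
  calc ‖∑ l ∈ s, v l‖ ^ 2 ≤ (∑ l ∈ s, ‖v l‖) ^ 2 := by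
        apply pow_le_pow_left₀ (norm_nonneg _) (norm_sum_le s v)
    _ ≤ (s.card : ℝ) * ∑ l ∈ s, ‖v l‖ ^ 2 := by
        exact_mod_cast sq_sum_le_card_mul_sum_sq (s := s) (f := fun l => ‖v l‖)

set_option maxHeartbeats 1000000 in
/-- Bound on the total drift of the iterates within one correlated period
(intermediate step in the proof of the Main Lemma). Here `r = (t / τ) * τ`
and `φ j y = ‖∑_{l = r}^{j} (∇f y - ∇f_{i_l} y)‖²`. -/
theorem stmt_2
    (d n : ℕ) (hd : 1 ≤ d) (hn : 1 ≤ n)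
    (L : ℝ) (hL : 0 < L)
    (f' : Fin n → EuclideanSpace ℝ (Fin d) → ℝ)
    (hdiff : ∀ i, Differentiable ℝ (f' i))
    (hlip : ∀ i (x y : EuclideanSpace ℝ (Fin d)),
      ‖gradient (f' i) x - gradient (f' i) y‖ ≤ L * ‖x - y‖)
    (f : EuclideanSpace ℝ (Fin d) → ℝ)
    (hf : f = fun x => (1 / n : ℝ) * ∑ i, f' i x)
    (γ : ℝ) (hγ0 : 0 < γ)
    (T : ℕ)
    (idx : ℕ → Fin n)
    (x : ℕ → EuclideanSpace ℝ (Fin d))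
    (hx : ∀ t, x (t + 1) = x t - γ • gradient (f' (idx t)) (x t))
    (τ : ℕ) (hτ1 : 1 ≤ τ) (hγτ : γ * L * τ ≤ 1 / (8 * Real.sqrt 3))
    (t : ℕ) (ht : t ≤ T) :
    ∑ j ∈ Finset.Icc (t / τ * τ) t, ‖x (t / τ * τ) - x j‖ ^ 2 ≤
      32 * γ ^ 2 / 5 *
        ∑ j ∈ Finset.Icc (t / τ * τ) t,
          ‖∑ l ∈ Finset.Icc (t / τ * τ) j,
            (gradient f (x (t / τ * τ)) -
              gradient (f' (idx l)) (x (t / τ * τ)))‖ ^ 2 +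
      32 * γ ^ 2 * τ ^ 2 / 15 *
        ∑ j ∈ Finset.Icc (t / τ * τ) t, ‖gradient f (x j)‖ ^ 2 := by
  have hτ0 : 0 < τ := hτ1
  set r := t / τ * τ with hr
  have hrt : r ≤ t := Nat.div_mul_le_self t τ
  have hrmod : r + t % τ = t := by
    rw [hr]; exact Nat.div_add_mod' t τ
  have hmodlt : t % τ < τ := Nat.mod_lt t hτ0
  -- gradient of f
  have hgradf : ∀ y, gradient f y = (1 / n : ℝ) • ∑ i, gradient (f' i) y := by
    intro y
    have h1 : HasFDerivAt (fun x => ∑ i, f' i x)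
        (∑ i, InnerProductSpace.toDual ℝ _ (gradient (f' i) y)) y :=
      HasFDerivAt.fun_sum (fun i _ => ((hdiff i y).hasGradientAt).hasFDerivAt)
    have h2 := h1.const_mul (1 / n : ℝ)
    have h3 : HasGradientAt f ((1 / n : ℝ) • ∑ i, gradient (f' i) y) y := by
      rw [hf, hasGradientAt_iff_hasFDerivAt]
      convert h2 using 1
      · rfl
      simp [map_smul, map_sum]
    exact h3.gradient
  have hn0 : (0 : ℝ) < n := by exact_mod_cast hn
  -- gradient of f is L-Lipschitz
  have hlipf : ∀ a b : EuclideanSpace ℝ (Fin d),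
      ‖gradient f a - gradient f b‖ ≤ L * ‖a - b‖ := by
    intro a b
    rw [hgradf a, hgradf b, ← smul_sub, ← Finset.sum_sub_distrib, norm_smul]
    have h1 : ‖(1 / n : ℝ)‖ = 1 / n := by
      rw [Real.norm_eq_abs, abs_of_nonneg (by positivity)]
    rw [h1]
    calc (1 / n : ℝ) * ‖∑ i, (gradient (f' i) a - gradient (f' i) b)‖
        ≤ (1 / n : ℝ) * ∑ _i : Fin n, (L * ‖a - b‖) := by
          refine mul_le_mul_of_nonneg_left ?_ (by positivity)
          exact (norm_sum_le _ _).trans (Finset.sum_le_sum fun i _ => hlip i a b)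
      _ = L * ‖a - b‖ := by
          rw [Finset.sum_const, Finset.card_univ, Fintype.card_fin, nsmul_eq_mul]
          field_simp
  -- iterate identity
  have hiter : ∀ j, r ≤ j →
      x r - x j = γ • ∑ l ∈ Finset.Ico r j, gradient (f' (idx l)) (x l) := by
    intro j hj
    induction j with
    | zero =>
        have h0 : r = 0 := Nat.le_zero.mp hj
        simp [h0]
    | succ k ih =>
        rcases Nat.lt_or_ge k r with h | h
        · have hkr : r = k + 1 := by omega
          rw [hkr]
          simp
        · have hk := ih h
          rw [Finset.sum_Ico_succ_top h, hx k, smul_add, ← hk]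
          abel
  -- abbreviations
  set Φ := ∑ j ∈ Finset.Icc r t,
      ‖∑ l ∈ Finset.Icc r j,
        (gradient f (x r) - gradient (f' (idx l)) (x r))‖ ^ 2 with hΦ
  set G := ∑ j ∈ Finset.Icc r t, ‖gradient f (x j)‖ ^ 2 with hG
  set S := ∑ j ∈ Finset.Icc r t, ‖x r - x j‖ ^ 2 with hS
  have hS0 : (0 : ℝ) ≤ S := by rw [hS]; positivity
  have hΦ0 : (0 : ℝ) ≤ Φ := by rw [hΦ]; positivity
  have hG0 : (0 : ℝ) ≤ G := by rw [hG]; positivity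
  set v1 : ℕ → EuclideanSpace ℝ (Fin d) := fun l =>
    (gradient (f' (idx l)) (x l) - gradient (f' (idx l)) (x r)) +
      (gradient f (x r) - gradient f (x l)) with hv1
  set v2 : ℕ → EuclideanSpace ℝ (Fin d) := fun l =>
    gradient (f' (idx l)) (x r) - gradient f (x r) with hv2
  set v3 : ℕ → EuclideanSpace ℝ (Fin d) := fun l => gradient f (x l) with hv3
  -- per-step decomposition bound
  have hkey : ∀ j ∈ Finset.Icc r t, ‖x r - x j‖ ^ 2 ≤
      γ ^ 2 * (16 * ‖∑ l ∈ Finset.Ico r j, v1 l‖ ^ 2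
        + 64 / 15 * ‖∑ l ∈ Finset.Ico r j, v2 l‖ ^ 2
        + 64 / 45 * ‖∑ l ∈ Finset.Ico r j, v3 l‖ ^ 2) := by
    intro j hj
    obtain ⟨hj1, hj2⟩ := Finset.mem_Icc.mp hj
    have hdecomp : (∑ l ∈ Finset.Ico r j, gradient (f' (idx l)) (x l))
        = (∑ l ∈ Finset.Ico r j, v1 l) + (∑ l ∈ Finset.Ico r j, v2 l)
          + (∑ l ∈ Finset.Ico r j, v3 l) := by
      rw [← Finset.sum_add_distrib, ← Finset.sum_add_distrib]
      refine Finset.sum_congr rfl fun l _ => ?_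
      simp only [hv1, hv2, hv3]
      abel
    rw [hiter j hj1, hdecomp, norm_smul, mul_pow]
    have h1 : ‖γ‖ ^ 2 = γ ^ 2 := by rw [Real.norm_eq_abs, sq_abs]
    rw [h1]
    refine mul_le_mul_of_nonneg_left ?_ (by positivity)
    calc ‖(∑ l ∈ Finset.Ico r j, v1 l) + (∑ l ∈ Finset.Ico r j, v2 l)
          + (∑ l ∈ Finset.Ico r j, v3 l)‖ ^ 2
        ≤ (‖∑ l ∈ Finset.Ico r j, v1 l‖ + ‖∑ l ∈ Finset.Ico r j, v2 l‖
            + ‖∑ l ∈ Finset.Ico r j, v3 l‖) ^ 2 :=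
          pow_le_pow_left₀ (norm_nonneg _) norm_add₃_le 2
      _ ≤ _ := aux_w3 _ _ _
  have hsub : ∀ j ∈ Finset.Icc r t, Finset.Ico r j ⊆ Finset.Icc r t := by
    intro j hj l hl
    obtain ⟨hj1, hj2⟩ := Finset.mem_Icc.mp hj
    obtain ⟨h1, h2⟩ := Finset.mem_Ico.mp hl
    exact Finset.mem_Icc.mpr ⟨h1, by omega⟩
  have hcard : ∀ j ∈ Finset.Icc r t, ((Finset.Ico r j).card : ℝ) ≤ (τ : ℝ) := by
    intro j hj
    obtain ⟨hj1, hj2⟩ := Finset.mem_Icc.mp hj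
    rw [Nat.card_Ico]
    exact_mod_cast (by omega : j - r ≤ τ)
  -- sum of first terms
  have hE : ∀ j ∈ Finset.Icc r t,
      ‖∑ l ∈ Finset.Ico r j, v1 l‖ ^ 2 ≤ (τ : ℝ) * (4 * L ^ 2 * S) := by
    intro j hj
    refine (aux_norm_sum_sq (Finset.Ico r j) v1).trans ?_
    have h2 : ∑ l ∈ Finset.Ico r j, ‖v1 l‖ ^ 2 ≤ 4 * L ^ 2 * S := by
      have h3 : ∑ l ∈ Finset.Ico r j, ‖v1 l‖ ^ 2
          ≤ ∑ l ∈ Finset.Ico r j, 4 * L ^ 2 * ‖x r - x l‖ ^ 2 := by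
        refine Finset.sum_le_sum fun l _ => ?_
        have ha : ‖v1 l‖ ≤ 2 * L * ‖x r - x l‖ := by
          rw [hv1]
          refine (norm_add_le _ _).trans ?_
          have hb : ‖gradient (f' (idx l)) (x l) - gradient (f' (idx l)) (x r)‖
              ≤ L * ‖x r - x l‖ := by
            calc _ ≤ L * ‖x l - x r‖ := hlip _ _ _
              _ = L * ‖x r - x l‖ := by rw [norm_sub_rev]
          have hc : ‖gradient f (x r) - gradient f (x l)‖ ≤ L * ‖x r - x l‖ :=
            hlipf _ _
          linarith
        calc ‖v1 l‖ ^ 2 ≤ (2 * L * ‖x r - x l‖) ^ 2 :=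
              pow_le_pow_left₀ (norm_nonneg _) ha 2
          _ = 4 * L ^ 2 * ‖x r - x l‖ ^ 2 := by ring
      refine h3.trans ?_
      calc ∑ l ∈ Finset.Ico r j, 4 * L ^ 2 * ‖x r - x l‖ ^ 2
          ≤ ∑ l ∈ Finset.Icc r t, 4 * L ^ 2 * ‖x r - x l‖ ^ 2 :=
            Finset.sum_le_sum_of_subset_of_nonneg (hsub j hj)
              (fun _ _ _ => by positivity)
        _ = 4 * L ^ 2 * S := by rw [hS, Finset.mul_sum]
    exact mul_le_mul (hcard j hj) h2 (by positivity) (by positivity)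
  -- sum of third terms
  have hH : ∀ j ∈ Finset.Icc r t,
      ‖∑ l ∈ Finset.Ico r j, v3 l‖ ^ 2 ≤ (τ : ℝ) * G := by
    intro j hj
    refine (aux_norm_sum_sq (Finset.Ico r j) v3).trans ?_
    have h2 : ∑ l ∈ Finset.Ico r j, ‖v3 l‖ ^ 2 ≤ G := by
      rw [hG]
      exact Finset.sum_le_sum_of_subset_of_nonneg (hsub j hj)
        (fun _ _ _ => by positivity)
    exact mul_le_mul (hcard j hj) h2 (by positivity) (by positivity)
  have hcardIcc : ((Finset.Icc r t).card : ℝ) ≤ (τ : ℝ) := by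
    rw [Nat.card_Icc]
    exact_mod_cast (by omega : t + 1 - r ≤ τ)
  have hsumE : ∑ j ∈ Finset.Icc r t, ‖∑ l ∈ Finset.Ico r j, v1 l‖ ^ 2
      ≤ (τ : ℝ) * ((τ : ℝ) * (4 * L ^ 2 * S)) := by
    calc ∑ j ∈ Finset.Icc r t, ‖∑ l ∈ Finset.Ico r j, v1 l‖ ^ 2
        ≤ ∑ _j ∈ Finset.Icc r t, (τ : ℝ) * (4 * L ^ 2 * S) := Finset.sum_le_sum hE
      _ = ((Finset.Icc r t).card : ℝ) * ((τ : ℝ) * (4 * L ^ 2 * S)) := by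
          rw [Finset.sum_const, nsmul_eq_mul]
      _ ≤ (τ : ℝ) * ((τ : ℝ) * (4 * L ^ 2 * S)) := by
          refine mul_le_mul_of_nonneg_right hcardIcc (by positivity)
  have hsumH : ∑ j ∈ Finset.Icc r t, ‖∑ l ∈ Finset.Ico r j, v3 l‖ ^ 2
      ≤ (τ : ℝ) * ((τ : ℝ) * G) := by
    calc ∑ j ∈ Finset.Icc r t, ‖∑ l ∈ Finset.Ico r j, v3 l‖ ^ 2
        ≤ ∑ _j ∈ Finset.Icc r t, (τ : ℝ) * G := Finset.sum_le_sum hH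
      _ = ((Finset.Icc r t).card : ℝ) * ((τ : ℝ) * G) := by
          rw [Finset.sum_const, nsmul_eq_mul]
      _ ≤ (τ : ℝ) * ((τ : ℝ) * G) := by
          refine mul_le_mul_of_nonneg_right hcardIcc (by positivity)
  -- sum of middle terms: reindexing
  have hBsum : ∑ j ∈ Finset.Icc r t, ‖∑ l ∈ Finset.Ico r j, v2 l‖ ^ 2 ≤ Φ := by
    have hneg : ∀ j : ℕ, ‖∑ l ∈ Finset.Ico r j, v2 l‖ ^ 2
        = ‖∑ l ∈ Finset.Ico r j,
            (gradient f (x r) - gradient (f' (idx l)) (x r))‖ ^ 2 := by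
      intro j
      rw [show (∑ l ∈ Finset.Ico r j, v2 l)
          = -∑ l ∈ Finset.Ico r j,
              (gradient f (x r) - gradient (f' (idx l)) (x r)) by
        rw [← Finset.sum_neg_distrib]
        refine Finset.sum_congr rfl fun l _ => ?_
        simp only [hv2]
        abel]
      rw [norm_neg]
    simp only [hneg]
    have hstep : ∑ j ∈ Finset.Icc r t,
        ‖∑ l ∈ Finset.Ico r j,
          (gradient f (x r) - gradient (f' (idx l)) (x r))‖ ^ 2
        = ∑ j ∈ Finset.Ico r t,
            ‖∑ l ∈ Finset.Icc r j,
              (gradient f (x r) - gradient (f' (idx l)) (x r))‖ ^ 2 := by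
      rw [← Finset.Ico_add_one_right_eq_Icc,
        Finset.sum_eq_sum_Ico_succ_bot (by omega : r < t + 1)]
      simp only [Finset.Ico_self, Finset.sum_empty, norm_zero]
      rw [zero_pow (by norm_num : 2 ≠ 0), zero_add]
      rw [Finset.sum_Ico_eq_sum_range, Finset.sum_Ico_eq_sum_range]
      rw [show t + 1 - (r + 1) = t - r by omega]
      refine Finset.sum_congr rfl fun i _ => ?_
      rw [show r + 1 + i = (r + i) + 1 by omega, Finset.Ico_add_one_right_eq_Icc]
    rw [hstep, hΦ]
    exact Finset.sum_le_sum_of_subset_of_nonneg Finset.Ico_subset_Icc_self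
      (fun _ _ _ => by positivity)
  -- assemble
  have hsum1 : S ≤ γ ^ 2 *
      (16 * ∑ j ∈ Finset.Icc r t, ‖∑ l ∈ Finset.Ico r j, v1 l‖ ^ 2
        + 64 / 15 * ∑ j ∈ Finset.Icc r t, ‖∑ l ∈ Finset.Ico r j, v2 l‖ ^ 2
        + 64 / 45 * ∑ j ∈ Finset.Icc r t, ‖∑ l ∈ Finset.Ico r j, v3 l‖ ^ 2) := by
    rw [hS]
    refine (Finset.sum_le_sum hkey).trans_eq ?_
    rw [← Finset.mul_sum]
    congr 1
    rw [Finset.sum_add_distrib, Finset.sum_add_distrib, ← Finset.mul_sum,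
      ← Finset.mul_sum, ← Finset.mul_sum]
  have hmain : S ≤ γ ^ 2 * (16 * ((τ : ℝ) * ((τ : ℝ) * (4 * L ^ 2 * S)))
      + 64 / 15 * Φ + 64 / 45 * ((τ : ℝ) * ((τ : ℝ) * G))) := by
    refine hsum1.trans ?_
    have h16 := mul_le_mul_of_nonneg_left hsumE (by norm_num : (0:ℝ) ≤ 16)
    have hB' := mul_le_mul_of_nonneg_left hBsum (by norm_num : (0:ℝ) ≤ 64 / 15)
    have hH' := mul_le_mul_of_nonneg_left hsumH (by norm_num : (0:ℝ) ≤ 64 / 45)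
    have := add_le_add (add_le_add h16 hB') hH'
    exact mul_le_mul_of_nonneg_left this (by positivity)
  -- numerics
  have h192 : γ ^ 2 * L ^ 2 * (τ : ℝ) ^ 2 ≤ 1 / 192 := by
    have h3 : (0 : ℝ) ≤ γ * L * (τ : ℝ) := by positivity
    have h4 := pow_le_pow_left₀ h3 hγτ 2
    have h5 : (1 / (8 * Real.sqrt 3)) ^ 2 = 1 / 192 := by
      rw [div_pow, mul_pow, Real.sq_sqrt (by norm_num : (0:ℝ) ≤ 3)]
      norm_num
    calc γ ^ 2 * L ^ 2 * (τ : ℝ) ^ 2 = (γ * L * (τ : ℝ)) ^ 2 := by ring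
      _ ≤ (1 / (8 * Real.sqrt 3)) ^ 2 := h4
      _ = 1 / 192 := h5
  have hfin : γ ^ 2 * L ^ 2 * (τ : ℝ) ^ 2 * S ≤ 1 / 192 * S :=
    mul_le_mul_of_nonneg_right h192 hS0
  nlinarith [hmain, hfin, hΦ0, hG0, hS0,
    mul_nonneg (sq_nonneg γ) hΦ0, mul_nonneg (sq_nonneg γ) hG0]
end

section
/- Let g : ℝ^d → ℝ be differentiable with L-Lipschitz gradient, and let γ > 0. Then for all x̃, x ∈ ℝ^d, g(x̃ − γ∇g(x)) ≤ g(x̃) − (γ/2)‖∇g(x̃)‖² − (γ/2)‖∇g(x)‖² + (γL²/2)‖x̃ − x‖² + (Lγ²/2)‖∇g(x)‖². -/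
open scoped BigOperators

open InnerProductSpace in
lemma descent_aux
    (d : ℕ) (L : ℝ) (hL : 0 < L)
    (g : EuclideanSpace ℝ (Fin d) → ℝ)
    (hdiff : Differentiable ℝ g)
    (hlip : ∀ x y : EuclideanSpace ℝ (Fin d),
      ‖gradient g x - gradient g y‖ ≤ L * ‖x - y‖) :
    ∀ x v : EuclideanSpace ℝ (Fin d),
      g (x + v) ≤ g x + inner ℝ (gradient g x) v + L / 2 * ‖v‖ ^ 2 := by
  intro x v
  set φ : ℝ → ℝ := fun t =>
    g (x + t • v) - t * inner ℝ (gradient g x) v - L * t ^ 2 / 2 * ‖v‖ ^ 2 with hφ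
  have hderiv : ∀ t : ℝ, HasDerivAt φ
      ((inner ℝ (gradient g (x + t • v)) v : ℝ) - inner ℝ (gradient g x) v
        - L * t * ‖v‖ ^ 2) t := by
    intro t
    have h1 : HasDerivAt (fun t : ℝ => x + t • v) v t := by
      simpa using ((hasDerivAt_id t).smul_const v).const_add x
    have h2 : HasDerivAt (fun t : ℝ => g (x + t • v))
        ((inner ℝ (gradient g (x + t • v)) v : ℝ)) t := by
      have := ((hdiff (x + t • v)).hasGradientAt.hasFDerivAt).comp_hasDerivAt t h1
      exact this
    have h3 : HasDerivAt (fun t : ℝ => t * (inner ℝ (gradient g x) v : ℝ))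
        (inner ℝ (gradient g x) v) t := by
      simpa using (hasDerivAt_id t).mul_const (inner ℝ (gradient g x) v : ℝ)
    have h4 : HasDerivAt (fun t : ℝ => L * t ^ 2 / 2 * ‖v‖ ^ 2)
        (L * t * ‖v‖ ^ 2) t := by
      have : HasDerivAt (fun t : ℝ => L * t ^ 2 / 2 * ‖v‖ ^ 2)
          (L * (2 * t) / 2 * ‖v‖ ^ 2) t := by
        exact ((((hasDerivAt_pow 2 t).const_mul L).div_const 2).mul_const _).congr_deriv
          (by ring)
      simpa using this.congr_deriv (by ring)
    exact (h2.sub h3).sub h4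
  have hmono : AntitoneOn φ (Set.Icc 0 1) := by
    apply antitoneOn_of_deriv_nonpos (convex_Icc 0 1)
    · exact fun t _ => ((hderiv t).continuousAt).continuousWithinAt
    · exact fun t _ => (hderiv t).differentiableAt.differentiableWithinAt
    · intro t ht
      rw [interior_Icc] at ht
      rw [(hderiv t).deriv]
      have hb : (inner ℝ (gradient g (x + t • v) - gradient g x) v : ℝ)
          ≤ L * t * ‖v‖ ^ 2 := by
        calc (inner ℝ (gradient g (x + t • v) - gradient g x) v : ℝ)
            ≤ ‖gradient g (x + t • v) - gradient g x‖ * ‖v‖ :=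
              real_inner_le_norm _ _
          _ ≤ L * ‖(x + t • v) - x‖ * ‖v‖ := by
              have := hlip (x + t • v) x
              exact mul_le_mul_of_nonneg_right this (norm_nonneg v)
          _ = L * t * ‖v‖ ^ 2 := by
              rw [show (x + t • v) - x = t • v by abel, norm_smul]
              simp [abs_of_nonneg ht.1.le]
              ring
      have := inner_sub_left (𝕜 := ℝ) (gradient g (x + t • v)) (gradient g x) v
      linarith [hb, this.symm.le, this.le]
  have h01 := hmono (Set.mem_Icc.2 ⟨le_refl 0, zero_le_one⟩)
    (Set.mem_Icc.2 ⟨zero_le_one, le_refl 1⟩) zero_le_one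
  simp only [hφ, one_smul, zero_smul, add_zero, one_pow, zero_pow, one_mul, zero_mul,
    mul_zero, sub_zero] at h01
  nlinarith [h01]

/-- Descent inequality for one virtual-sequence step of an L-smooth function. -/
theorem stmt_4
    (d : ℕ) (hd : 1 ≤ d)
    (L : ℝ) (hL : 0 < L)
    (g : EuclideanSpace ℝ (Fin d) → ℝ)
    (hdiff : Differentiable ℝ g)
    (hlip : ∀ x y : EuclideanSpace ℝ (Fin d),
      ‖gradient g x - gradient g y‖ ≤ L * ‖x - y‖)
    (γ : ℝ) (hγ : 0 < γ) :
    ∀ xt x : EuclideanSpace ℝ (Fin d),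
      g (xt - γ • gradient g x) ≤
        g xt - γ / 2 * ‖gradient g xt‖ ^ 2 - γ / 2 * ‖gradient g x‖ ^ 2 +
          γ * L ^ 2 / 2 * ‖xt - x‖ ^ 2 + L * γ ^ 2 / 2 * ‖gradient g x‖ ^ 2 := by
  intro xt x
  have key := descent_aux d L hL g hdiff hlip xt (-(γ • gradient g x))
  rw [← sub_eq_add_neg] at key
  have hinner : (inner ℝ (gradient g xt) (-(γ • gradient g x)) : ℝ)
      = -γ * inner ℝ (gradient g xt) (gradient g x) := by
    rw [inner_neg_right, real_inner_smul_right]; ring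
  have hnorm : ‖-(γ • gradient g x)‖ ^ 2 = γ ^ 2 * ‖gradient g x‖ ^ 2 := by
    rw [norm_neg, norm_smul]
    simp [mul_pow, sq_abs]
  -- −γ⟪a,b⟫ ≤ −γ/2‖a‖² − γ/2‖b‖² + γ/2‖a−b‖²
  have hexp : ‖gradient g xt - gradient g x‖ ^ 2
      = ‖gradient g xt‖ ^ 2 - 2 * inner ℝ (gradient g xt) (gradient g x)
        + ‖gradient g x‖ ^ 2 := by
    rw [← real_inner_self_eq_norm_sq, ← real_inner_self_eq_norm_sq,
      ← real_inner_self_eq_norm_sq, inner_sub_sub_self,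
      real_inner_comm (gradient g x) (gradient g xt)]
    ring
  have hlipb : ‖gradient g xt - gradient g x‖ ^ 2 ≤ L ^ 2 * ‖xt - x‖ ^ 2 := by
    have h := hlip xt x
    have := norm_nonneg (gradient g xt - gradient g x)
    nlinarith [norm_nonneg (xt - x)]
  rw [hinner, hnorm] at key
  nlinarith [key, hlipb, hexp]
end

section
/- Let g : ℝ^d → ℝ be differentiable with L-Lipschitz gradient, L > 0, let γ > 0 and let τ ≥ 1 be an integer. Let points y_{t−τ+1},…,y_t ∈ ℝ^d and z_{t−τ+1},…,z_t ∈ ℝ^d satisfy y_{k+1} = y_k − γ∇g(z_k) for t−τ+1 ≤ k ≤ t−1. Then (1/L)·‖∇g(y_t)‖² ≤ 2γ²·L·τ·∑_{j=0}^{τ−1} ‖∇g(z_{t−j})‖² + (2/(L·τ))·∑_{j=0}^{τ−1} ‖∇g(y_{t−j})‖². -/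
open scoped BigOperators

/-- Bound on the gradient norm at the current point through the gradients
along a window of τ virtual-sequence steps (the T₄ estimate). The recursion
`y (k+1) = y k - γ • ∇g (z k)` is required for `t - τ + 1 ≤ k ≤ t - 1`,
expressed without natural-number truncated subtraction as
`t + 1 ≤ k + τ` and `k + 1 ≤ t`. -/
theorem stmt_5
    (d : ℕ) (hd : 1 ≤ d)
    (L : ℝ) (hL : 0 < L)
    (g : EuclideanSpace ℝ (Fin d) → ℝ)
    (hdiff : Differentiable ℝ g)
    (hlip : ∀ x y : EuclideanSpace ℝ (Fin d),
      ‖gradient g x - gradient g y‖ ≤ L * ‖x - y‖)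
    (γ : ℝ) (hγ : 0 < γ)
    (τ : ℕ) (hτ : 1 ≤ τ)
    (t : ℕ) (ht : τ ≤ t + 1)
    (y z : ℕ → EuclideanSpace ℝ (Fin d))
    (hy : ∀ k, t + 1 ≤ k + τ → k + 1 ≤ t →
      y (k + 1) = y k - γ • gradient g (z k)) :
    (1 / L) * ‖gradient g (y t)‖ ^ 2 ≤
      2 * γ ^ 2 * L * τ * ∑ j ∈ Finset.range τ, ‖gradient g (z (t - j))‖ ^ 2 +
        2 / (L * τ) * ∑ j ∈ Finset.range τ, ‖gradient g (y (t - j))‖ ^ 2 := by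
  set S : ℝ := ∑ j ∈ Finset.range τ, ‖gradient g (z (t - j))‖ ^ 2 with hS
  set Y : ℝ := ∑ j ∈ Finset.range τ, ‖gradient g (y (t - j))‖ ^ 2 with hY
  -- telescoping
  have tel : ∀ j, j < τ →
      y t - y (t - j) = -(γ • ∑ i ∈ Finset.Icc 1 j, gradient g (z (t - i))) := by
    intro j
    induction j with
    | zero => intro _; simp
    | succ j ih =>
      intro hj
      have hjτ : j < τ := by omega
      have hjt : j + 1 ≤ t := by omega
      have hstep : y (t - j) = y (t - (j + 1)) - γ • gradient g (z (t - (j + 1))) := by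
        have h1 : t - (j + 1) + 1 = t - j := by omega
        have := hy (t - (j + 1)) (by omega) (by omega)
        rw [h1] at this
        exact this
      have hsum : ∑ i ∈ Finset.Icc 1 (j + 1), gradient g (z (t - i)) =
          (∑ i ∈ Finset.Icc 1 j, gradient g (z (t - i))) + gradient g (z (t - (j + 1))) :=
        Finset.sum_Icc_succ_top (by omega) _
      have hih := ih hjτ
      rw [hsum, smul_add]
      calc y t - y (t - (j + 1))
          = (y t - y (t - j)) + (y (t - j) - y (t - (j + 1))) := by abel
        _ = -(γ • ∑ i ∈ Finset.Icc 1 j, gradient g (z (t - i)))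
            + -(γ • gradient g (z (t - (j + 1)))) := by rw [hih, hstep]; abel
        _ = -((γ • ∑ i ∈ Finset.Icc 1 j, gradient g (z (t - i)))
            + γ • gradient g (z (t - (j + 1)))) := by abel
  -- bound on norm of difference
  have hnormd : ∀ j, j < τ →
      ‖y t - y (t - j)‖ ≤ γ * ∑ i ∈ Finset.range τ, ‖gradient g (z (t - i))‖ := by
    intro j hj
    rw [tel j hj, norm_neg, norm_smul, Real.norm_eq_abs, abs_of_pos hγ]
    gcongr
    calc ‖∑ i ∈ Finset.Icc 1 j, gradient g (z (t - i))‖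
        ≤ ∑ i ∈ Finset.Icc 1 j, ‖gradient g (z (t - i))‖ := norm_sum_le _ _
      _ ≤ ∑ i ∈ Finset.range τ, ‖gradient g (z (t - i))‖ := by
          apply Finset.sum_le_sum_of_subset_of_nonneg
          · intro i hi
            simp only [Finset.mem_Icc] at hi
            simp only [Finset.mem_range]
            omega
          · intro i _ _; positivity
  -- Cauchy-Schwarz
  have hCS : (∑ i ∈ Finset.range τ, ‖gradient g (z (t - i))‖) ^ 2 ≤ τ * S := by
    have := sq_sum_le_card_mul_sum_sq (s := Finset.range τ)
      (f := fun i => ‖gradient g (z (t - i))‖)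
    simpa using this
  -- per-j inequality
  have hperj : ∀ j ∈ Finset.range τ,
      ‖gradient g (y t)‖ ^ 2 ≤ 2 * (L ^ 2 * (γ ^ 2 * (τ * S)))
        + 2 * ‖gradient g (y (t - j))‖ ^ 2 := by
    intro j hj
    simp only [Finset.mem_range] at hj
    have h1 : ‖gradient g (y t)‖ ≤ ‖gradient g (y t) - gradient g (y (t - j))‖
        + ‖gradient g (y (t - j))‖ := by
      have := norm_sub_norm_le (gradient g (y t)) (gradient g (y (t - j)))
      linarith [norm_sub_norm_le (gradient g (y t)) (gradient g (y (t - j)))]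
    have h2 : ‖gradient g (y t) - gradient g (y (t - j))‖ ≤
        L * (γ * ∑ i ∈ Finset.range τ, ‖gradient g (z (t - i))‖) := by
      calc ‖gradient g (y t) - gradient g (y (t - j))‖ ≤ L * ‖y t - y (t - j)‖ :=
            hlip _ _
        _ ≤ L * (γ * ∑ i ∈ Finset.range τ, ‖gradient g (z (t - i))‖) := by
            gcongr; exact hnormd j hj
    have h3 : (L * (γ * ∑ i ∈ Finset.range τ, ‖gradient g (z (t - i))‖)) ^ 2
        ≤ L ^ 2 * (γ ^ 2 * (τ * S)) := by
      rw [mul_pow, mul_pow]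
      gcongr
    have hd1 : (0:ℝ) ≤ ‖gradient g (y t) - gradient g (y (t - j))‖ := norm_nonneg _
    have hd2 : (0:ℝ) ≤ ‖gradient g (y (t - j))‖ := norm_nonneg _
    have hd3 : (0:ℝ) ≤ ‖gradient g (y t)‖ := norm_nonneg _
    nlinarith [sq_nonneg (‖gradient g (y t) - gradient g (y (t - j))‖ - ‖gradient g (y (t - j))‖)]
  -- sum the per-j inequality
  have hsum2 : (τ : ℝ) * ‖gradient g (y t)‖ ^ 2 ≤
      τ * (2 * (L ^ 2 * (γ ^ 2 * (τ * S)))) + 2 * Y := by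
    calc (τ : ℝ) * ‖gradient g (y t)‖ ^ 2
        = ∑ _j ∈ Finset.range τ, ‖gradient g (y t)‖ ^ 2 := by
          simp [Finset.sum_const, mul_comm]
      _ ≤ _ := by
          refine (Finset.sum_le_sum hperj).trans ?_
          rw [Finset.sum_add_distrib, Finset.sum_const, Finset.card_range, nsmul_eq_mul,
            ← Finset.mul_sum, ← hY]
  -- finish
  have hτR : (0:ℝ) < τ := by exact_mod_cast hτ
  have heqL : (1 / L) * ‖gradient g (y t)‖ ^ 2
      = (1 / (L * τ)) * ((τ : ℝ) * ‖gradient g (y t)‖ ^ 2) := by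
    field_simp
  have heqR : 2 * γ ^ 2 * L * τ * S + 2 / (L * τ) * Y
      = (1 / (L * τ)) * (τ * (2 * (L ^ 2 * (γ ^ 2 * (τ * S)))) + 2 * Y) := by
    field_simp
  rw [heqL, heqR]
  exact mul_le_mul_of_nonneg_left hsum2 (by positivity)
end

section
/- There exists an absolute constant C > 0 with the following property. Let the index sequence be the single-shuffle (in particular, incremental gradient) order i_t = π((t mod n) + 1) for a fixed permutation π of {1,…,n}, let 0 < γ ≤ 1/(8√3·L), suppose σ_SGD² := sup_{x∈ℝ^d} (1/n)∑_{i=1}^{n} ‖∇f_i(x) − ∇f(x)‖² is finite and f is bounded below with f* = inf f. Then the iterates x_{t+1} = x_t − γ∇f_{i_t}(x_t) satisfy (1/(T+1)) ∑_{t=0}^{T} ‖∇f(x_t)‖² ≤ C·( (f(x_0) − f*)/(γ(T+1)) + L·γ·min{1, L·γ·n}·n·σ_SGD² ). -/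
open scoped BigOperators

open scoped BigOperators
open Finset InnerProductSpace intervalIntegral

set_option maxHeartbeats 1600000

section SGDAux

variable {E : Type*} [NormedAddCommGroup E] [InnerProductSpace ℝ E]

lemma sgd_iterate_eq (z H : ℕ → E) (γ : ℝ) (hz : ∀ j, z (j+1) = z j - γ • H j) :
    ∀ j, z j = z 0 - γ • ∑ u ∈ range j, H u := by
  intro j
  induction j with
  | zero => simp
  | succ j ih => rw [hz j, ih, sum_range_succ, smul_add, sub_sub]

lemma sgd_D_le (z H : ℕ → E) (γ : ℝ) (hγ : 0 ≤ γ) (hz : ∀ j, z (j+1) = z j - γ • H j)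
    (ℓ : ℕ) : ∀ j ≤ ℓ, ‖z j - z 0‖ ≤ γ * ∑ u ∈ range ℓ, ‖H u‖ := by
  intro j hj
  have h1 : z j - z 0 = -(γ • ∑ u ∈ range j, H u) := by
    rw [sgd_iterate_eq z H γ hz j]; abel
  rw [h1, norm_neg, norm_smul, Real.norm_eq_abs, abs_of_nonneg hγ]
  apply mul_le_mul_of_nonneg_left _ hγ
  calc ‖∑ u ∈ range j, H u‖ ≤ ∑ u ∈ range j, ‖H u‖ := norm_sum_le _ _
  _ ≤ ∑ u ∈ range ℓ, ‖H u‖ := by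
      apply sum_le_sum_of_subset_of_nonneg (range_subset_range.mpr hj)
      intro i _ _; exact norm_nonneg _

lemma sgd_drift_SH (z H hh : ℕ → E) (G0 : E) (L γ : ℝ) (hL : 0 < L) (hγ : 0 < γ)
    (ℓ : ℕ) (hK : L*γ*ℓ ≤ 1/8)
    (hz : ∀ j, z (j+1) = z j - γ • H j)
    (hHh : ∀ j, ‖H j - hh j‖ ≤ L * ‖z j - z 0‖) :
    ∑ u ∈ range ℓ, ‖H u‖
      ≤ 2*((ℓ:ℝ)*‖G0‖ + ∑ u ∈ range ℓ, ‖hh u - G0‖) := by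
  set SH := ∑ u ∈ range ℓ, ‖H u‖ with hSHdef
  have hSH0 : 0 ≤ SH := sum_nonneg fun i _ => norm_nonneg _
  have hE10 : 0 ≤ ∑ u ∈ range ℓ, ‖hh u - G0‖ := sum_nonneg fun i _ => norm_nonneg _
  have hper : ∀ u ∈ range ℓ, ‖H u‖ ≤ ‖G0‖ + ‖hh u - G0‖ + L*(γ*SH) := by
    intro u hu
    have h1 : H u = (H u - hh u) + ((hh u - G0) + G0) := by abel
    calc ‖H u‖ = ‖(H u - hh u) + ((hh u - G0) + G0)‖ := by rw [← h1]
    _ ≤ ‖H u - hh u‖ + (‖hh u - G0‖ + ‖G0‖) :=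
        (norm_add_le _ _).trans (by gcongr; exact norm_add_le _ _)
    _ ≤ L*(γ*SH) + (‖hh u - G0‖ + ‖G0‖) := by
        gcongr
        calc ‖H u - hh u‖ ≤ L * ‖z u - z 0‖ := hHh u
        _ ≤ L * (γ * SH) := by
            apply mul_le_mul_of_nonneg_left _ hL.le
            exact sgd_D_le z H γ hγ.le hz ℓ u (mem_range.mp hu).le
    _ = ‖G0‖ + ‖hh u - G0‖ + L*(γ*SH) := by ring
  have hsum : SH ≤ (ℓ:ℝ)*‖G0‖ + (∑ u ∈ range ℓ, ‖hh u - G0‖) + (ℓ:ℝ)*(L*(γ*SH)) := by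
    calc SH ≤ ∑ u ∈ range ℓ, (‖G0‖ + ‖hh u - G0‖ + L*(γ*SH)) := sum_le_sum hper
    _ = (ℓ:ℝ)*‖G0‖ + (∑ u ∈ range ℓ, ‖hh u - G0‖) + (ℓ:ℝ)*(L*(γ*SH)) := by
        rw [sum_add_distrib, sum_add_distrib, sum_const, card_range, nsmul_eq_mul, sum_const,
          card_range, nsmul_eq_mul]
  have hKsh : (ℓ:ℝ)*(L*(γ*SH)) ≤ (1/8)*SH := by
    have h : (ℓ:ℝ)*(L*(γ*SH)) = (L*γ*ℓ)*SH := by ring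
    rw [h]
    exact mul_le_mul_of_nonneg_right hK hSH0
  linarith

lemma sgd_scalarW1 (l K g0 e E1 V V2 Lg : ℝ) (hl : 1 ≤ l) (hK0 : 0 ≤ K) (hK : K ≤ 1/8)
    (hg0 : 0 ≤ g0) (he : 0 ≤ e) (hE1 : 0 ≤ E1) (hV : 0 ≤ V) (hV2 : 0 ≤ V2)
    (heV2 : e^2 ≤ l * V2) (hE1V : E1^2 ≤ l * V) (hLg : Lg * l = K) (hLg0 : 0 ≤ Lg) :
    -(l*g0^2) + g0*e + g0*(2*K*(l*g0+E1)) + (3/2)*Lg*(l^2*g0^2 + e^2 + (2*K*(l*g0+E1))^2)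
      ≤ -(l/4*g0^2) + 10*K^2*V + 3*V2 := by
  have hl0 : 0 < l := by linarith
  have hP : 0 ≤ l*g0^2 := by positivity
  have hK2 : K^2 ≤ (1:ℝ)/64 := by nlinarith
  have hK3' : K^3 ≤ (1:ℝ)/512 := by nlinarith
  have hK3 : 12*K^3*(l*g0^2) ≤ (3/128)*(l*g0^2) := by
    have := mul_le_mul_of_nonneg_right hK3' hP
    nlinarith
  have hKP1 : (3/2)*K*(l*g0^2) ≤ (3/16)*(l*g0^2) := by
    have := mul_le_mul_of_nonneg_right hK hP
    nlinarith
  have hKP3 : 2*K*(l*g0^2) ≤ (1/4)*(l*g0^2) := by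
    have := mul_le_mul_of_nonneg_right hK hP
    nlinarith
  have hKV : 12*K^2*(K*V) ≤ (3/2)*(K^2*V) := by
    have h0 : 0 ≤ K^2*V := mul_nonneg (sq_nonneg K) hV
    have := mul_le_mul_of_nonneg_right hK h0
    nlinarith
  have hKV2 : (3/2)*(K*V2) ≤ (3/16)*V2 := by
    have := mul_le_mul_of_nonneg_right hK hV2
    nlinarith
  have a1 : g0 * e ≤ l/8 * g0^2 + 2*V2 := by
    have h := sq_nonneg (l*g0 - 4*e)
    have h2 : 8*l*(g0*e) ≤ l*(l*g0^2) + 16*(l*V2) := by nlinarith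
    nlinarith
  have a2 : 2*K*(g0*E1) ≤ l/8*g0^2 + 8*K^2*V := by
    have h := sq_nonneg (l*g0 - 8*K*E1)
    have h2 : (K*E1)^2 ≤ K^2*(l*V) := by nlinarith [sq_nonneg K]
    have h3 : 16*l*(K*(g0*E1)) ≤ l*(l*g0^2) + 64*(K^2*(l*V)) := by nlinarith
    nlinarith
  have a3 : Lg * e^2 ≤ K * V2 := by
    calc Lg * e^2 ≤ Lg * (l * V2) := by nlinarith
    _ = K * V2 := by rw [← hLg]; ring
  have a4 : Lg * E1^2 ≤ K * V := by
    calc Lg * E1^2 ≤ Lg * (l * V) := by nlinarith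
    _ = K * V := by rw [← hLg]; ring
  have a5 : (3/2)*Lg*(2*K*(l*g0+E1))^2 ≤ 12*K^3*(l*g0^2) + 12*K^2*(K*V) := by
    have hexp : (2*K*(l*g0+E1))^2 ≤ 8*K^2*((l*g0)^2 + E1^2) := by
      nlinarith [sq_nonneg (l*g0 - E1), sq_nonneg K]
    have h1 : (3/2)*Lg*(2*K*(l*g0+E1))^2 ≤ (3/2)*Lg*(8*K^2*((l*g0)^2 + E1^2)) :=
      mul_le_mul_of_nonneg_left hexp (by positivity)
    have h2 : (3/2)*Lg*(8*K^2*((l*g0)^2 + E1^2)) = 12*K^2*(Lg*(l^2*g0^2)) + 12*K^2*(Lg*E1^2) := by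
      ring
    have h3 : Lg*(l^2*g0^2) = K*(l*g0^2) := by rw [← hLg]; ring
    have h4 : 12*K^2*(Lg*E1^2) ≤ 12*K^2*(K*V) :=
      mul_le_mul_of_nonneg_left a4 (by positivity)
    calc (3/2)*Lg*(2*K*(l*g0+E1))^2 ≤ 12*K^2*(Lg*(l^2*g0^2)) + 12*K^2*(Lg*E1^2) := by
          rw [← h2]; exact h1
    _ ≤ 12*K^2*(K*(l*g0^2)) + 12*K^2*(K*V) := by rw [h3]; linarith
    _ = 12*K^3*(l*g0^2) + 12*K^2*(K*V) := by ring
  have a6 : (3/2)*Lg*(l^2*g0^2) = (3/2)*K*(l*g0^2) := by rw [← hLg]; ring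
  have hKV3 : 0 ≤ K^2*V := mul_nonneg (sq_nonneg K) hV
  have expand : -(l*g0^2) + g0*e + g0*(2*K*(l*g0+E1)) + (3/2)*Lg*(l^2*g0^2 + e^2 + (2*K*(l*g0+E1))^2)
      = -(l*g0^2) + g0*e + 2*K*(l*g0^2) + 2*K*(g0*E1)
        + (3/2)*Lg*(l^2*g0^2) + (3/2)*(Lg*e^2) + (3/2)*Lg*(2*K*(l*g0+E1))^2 := by ring
  rw [expand, a6]
  have a3' : (3/2)*(Lg*e^2) ≤ (3/2)*(K*V2) := by linarith
  linarith

lemma sgd_scalarW2 (l K g0 E1 V Lg : ℝ) (hl : 0 ≤ l) (hK0 : 0 ≤ K) (hK : K ≤ 1/8) (hg0 : 0 ≤ g0)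
    (hE1 : 0 ≤ E1) (hV : 0 ≤ V) (hE1V : E1^2 ≤ l*V) (hLg : Lg*l = K) (hLg0 : 0 ≤ Lg) :
    l*(g0 + 2*Lg*(l*g0+E1))^2 ≤ 3*(l*g0^2) + 16*K^2*V := by
  have h1 : (g0 + 2*Lg*(l*g0+E1))^2 ≤ 2*g0^2 + 16*(Lg^2*((l*g0)^2 + E1^2)) := by
    nlinarith [sq_nonneg (g0 - 2*Lg*(l*g0+E1)), sq_nonneg (l*g0 - E1), sq_nonneg Lg,
      sq_nonneg (Lg*(l*g0-E1)), sq_nonneg (Lg*(l*g0+E1))]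
  have h2 := mul_le_mul_of_nonneg_left h1 hl
  have h3 : l*(2*g0^2 + 16*(Lg^2*((l*g0)^2+E1^2)))
      = 2*(l*g0^2) + 16*(K^2*(l*g0^2)) + 16*((Lg^2*l)*E1^2) := by
    rw [← hLg]; ring
  have h4 : (Lg^2*l)*E1^2 ≤ K^2*V := by
    calc (Lg^2*l)*E1^2 ≤ (Lg^2*l)*(l*V) := by
          apply mul_le_mul_of_nonneg_left hE1V (by positivity)
    _ = K^2*V := by rw [← hLg]; ring
  have h5 : K^2*(l*g0^2) ≤ (1/64)*(l*g0^2) := by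
    have hK2 : K^2 ≤ 1/64 := by nlinarith
    apply mul_le_mul_of_nonneg_right hK2 (by positivity)
  rw [h3] at h2
  nlinarith [mul_nonneg hl (sq_nonneg g0)]

lemma sgd_descent_lemma (f : E → ℝ) (G : E → E) (L : ℝ) (hL : 0 ≤ L) [CompleteSpace E]
    (hgrad : ∀ x, HasGradientAt f (G x) x)
    (hlip : ∀ a b, ‖G a - G b‖ ≤ L * ‖a - b‖) (a b : E) :
    f b ≤ f a + @inner ℝ _ _ (G a) (b - a) + L / 2 * ‖b - a‖ ^ 2 := by
  set v := b - a with hv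
  have hGcont : Continuous G := by
    have h : LipschitzWith L.toNNReal G := by
      apply LipschitzWith.of_dist_le_mul
      intro p q
      rw [dist_eq_norm, dist_eq_norm, Real.coe_toNNReal L hL]
      exact hlip p q
    exact h.continuous
  have hpath : ∀ t : ℝ, HasDerivAt (fun s : ℝ => a + s • v) v t := by
    intro t
    simpa using ((hasDerivAt_id t).smul_const v).const_add a
  have hder : ∀ t : ℝ, HasDerivAt (fun s : ℝ => f (a + s • v))
      (@inner ℝ _ _ (G (a + t • v)) v) t := by
    intro t
    have h1 : HasFDerivAt f ((toDual ℝ E) (G (a + t • v))) (a + t • v) := hgrad _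
    have h2 := h1.comp_hasDerivAt t (hpath t)
    simpa [toDual_apply_apply, Function.comp_def] using h2
  have hcont : Continuous fun t : ℝ => @inner ℝ _ _ (G (a + t • v)) v := by
    apply Continuous.inner
    · exact hGcont.comp (by continuity)
    · exact continuous_const
  have hftc : ∫ t in (0:ℝ)..1, @inner ℝ _ _ (G (a + t • v)) v
      = f (a + (1:ℝ) • v) - f (a + (0:ℝ) • v) := by
    exact integral_eq_sub_of_hasDerivAt (f := fun s : ℝ => f (a + s • v))
      (fun t _ => hder t) (hcont.intervalIntegrable 0 1)
  have hmono : ∫ t in (0:ℝ)..1, @inner ℝ _ _ (G (a + t • v)) v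
      ≤ ∫ t in (0:ℝ)..1, (@inner ℝ _ _ (G a) v + L * ‖v‖ ^ 2 * t) := by
    apply integral_mono_on (by norm_num)
    · exact hcont.intervalIntegrable 0 1
    · exact (by continuity : Continuous fun t : ℝ =>
        @inner ℝ _ _ (G a) v + L * ‖v‖ ^ 2 * t).intervalIntegrable 0 1
    · intro t ht
      have h1 : @inner ℝ _ _ (G (a + t • v)) v - @inner ℝ _ _ (G a) v
          = @inner ℝ _ _ (G (a + t • v) - G a) v := by
        rw [inner_sub_left]
      have h2 : @inner ℝ _ _ (G (a + t • v) - G a) v ≤ ‖G (a + t • v) - G a‖ * ‖v‖ :=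
        real_inner_le_norm _ _
      have h3 : ‖G (a + t • v) - G a‖ ≤ L * (t * ‖v‖) := by
        have h4 := hlip (a + t • v) a
        simp only [add_sub_cancel_left] at h4
        calc ‖G (a + t • v) - G a‖ ≤ L * ‖t • v‖ := h4
        _ = L * (|t| * ‖v‖) := by rw [norm_smul]; norm_num
        _ = L * (t * ‖v‖) := by rw [abs_of_nonneg ht.1]
      nlinarith [norm_nonneg v, mul_le_mul_of_nonneg_right h3 (norm_nonneg v),
        mul_le_mul_of_nonneg_right (mul_le_mul_of_nonneg_left (le_refl (t*‖v‖)) hL) (norm_nonneg v)]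
  have hcomp : ∫ t in (0:ℝ)..1, (@inner ℝ _ _ (G a) v + L * ‖v‖ ^ 2 * t)
      = @inner ℝ _ _ (G a) v + L / 2 * ‖v‖ ^ 2 := by
    rw [integral_add (intervalIntegrable_const)
      ((intervalIntegrable_id.const_mul _))]
    rw [integral_const_mul, integral_id, integral_const]
    simp
    ring
  have hfin : f b - f a ≤ @inner ℝ _ _ (G a) v + L / 2 * ‖v‖ ^ 2 := by
    have hb : a + (1:ℝ) • v = b := by rw [hv]; simp
    have ha : a + (0:ℝ) • v = a := by simp
    rw [hb, ha] at hftc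
    rw [hcomp] at hmono
    linarith
  linarith

lemma sgd_window_conv (G : E → E) (L γ : ℝ) (hL : 0 < L) (hγ : 0 < γ)
    (hGlip : ∀ a b, ‖G a - G b‖ ≤ L * ‖a - b‖)
    (ℓ : ℕ) (hK : L*γ*ℓ ≤ 1/8)
    (z H hh : ℕ → E)
    (hz : ∀ j, z (j+1) = z j - γ • H j)
    (hHh : ∀ j, ‖H j - hh j‖ ≤ L * ‖z j - z 0‖)
    (V : ℝ) (hV : 0 ≤ V)
    (hvar : ∑ j ∈ range ℓ, ‖hh j - G (z 0)‖^2 ≤ V) :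
    ∑ j ∈ range ℓ, ‖G (z j)‖^2 ≤ 3*((ℓ:ℝ)*‖G (z 0)‖^2) + 16*(L*γ*ℓ)^2*V := by
  set g0 := ‖G (z 0)‖ with hg0def
  set E1 := ∑ u ∈ range ℓ, ‖hh u - G (z 0)‖ with hE1def
  have hg00 : 0 ≤ g0 := norm_nonneg _
  have hE10 : 0 ≤ E1 := sum_nonneg fun i _ => norm_nonneg _
  have hSH := sgd_drift_SH z H hh (G (z 0)) L γ hL hγ ℓ hK hz hHh
  have hbnd : ∀ j ∈ range ℓ, ‖G (z j)‖^2 ≤ (g0 + 2*(L*γ)*((ℓ:ℝ)*g0+E1))^2 := by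
    intro j hj
    have h1 : ‖G (z j)‖ ≤ g0 + L * ‖z j - z 0‖ := by
      calc ‖G (z j)‖ = ‖G (z 0) + (G (z j) - G (z 0))‖ := by congr 1; abel
      _ ≤ g0 + ‖G (z j) - G (z 0)‖ := norm_add_le _ _
      _ ≤ g0 + L * ‖z j - z 0‖ := by gcongr; exact hGlip _ _
    have h2 : ‖z j - z 0‖ ≤ γ * ∑ u ∈ range ℓ, ‖H u‖ :=
      sgd_D_le z H γ hγ.le hz ℓ j (mem_range.mp hj).le
    have h3 : ‖G (z j)‖ ≤ g0 + 2*(L*γ)*((ℓ:ℝ)*g0+E1) := by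
      calc ‖G (z j)‖ ≤ g0 + L * (γ * ∑ u ∈ range ℓ, ‖H u‖) := by
            refine h1.trans ?_
            gcongr
      _ ≤ g0 + L * (γ * (2*((ℓ:ℝ)*g0+E1))) := by
            gcongr
      _ = g0 + 2*(L*γ)*((ℓ:ℝ)*g0+E1) := by ring
    have h0 : 0 ≤ ‖G (z j)‖ := norm_nonneg _
    nlinarith [h3]
  have hsum : ∑ j ∈ range ℓ, ‖G (z j)‖^2 ≤ (ℓ:ℝ) * (g0 + 2*(L*γ)*((ℓ:ℝ)*g0+E1))^2 := by
    calc ∑ j ∈ range ℓ, ‖G (z j)‖^2 ≤ ∑ _j ∈ range ℓ, (g0 + 2*(L*γ)*((ℓ:ℝ)*g0+E1))^2 :=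
          sum_le_sum hbnd
    _ = (ℓ:ℝ) * (g0 + 2*(L*γ)*((ℓ:ℝ)*g0+E1))^2 := by
        rw [sum_const, card_range, nsmul_eq_mul]
  have hE1V : E1^2 ≤ (ℓ:ℝ)*V := by
    calc E1^2 ≤ (range ℓ).card * ∑ u ∈ range ℓ, ‖hh u - G (z 0)‖^2 :=
          sq_sum_le_card_mul_sum_sq
    _ ≤ (ℓ:ℝ)*V := by rw [card_range]; exact mul_le_mul_of_nonneg_left hvar (by positivity)
  have hfin := sgd_scalarW2 (ℓ:ℝ) (L*γ*ℓ) g0 E1 V (L*γ) (by positivity) (by positivity) hK hg00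
    hE10 hV hE1V rfl (by positivity)
  calc ∑ j ∈ range ℓ, ‖G (z j)‖^2 ≤ (ℓ:ℝ) * (g0 + 2*(L*γ)*((ℓ:ℝ)*g0+E1))^2 := hsum
  _ ≤ 3*((ℓ:ℝ)*g0^2) + 16*(L*γ*ℓ)^2*V := hfin

lemma sgd_window_descent (f : E → ℝ) (G : E → E) (L γ : ℝ) (hL : 0 < L) (hγ : 0 < γ)
    (hdesc : ∀ a b, f b ≤ f a + @inner ℝ _ _ (G a) (b - a) + L/2 * ‖b-a‖^2)
    (ℓ : ℕ) (hℓ1 : 1 ≤ ℓ) (hK : L*γ*ℓ ≤ 1/8)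
    (z H hh : ℕ → E)
    (hz : ∀ j, z (j+1) = z j - γ • H j)
    (hHh : ∀ j, ‖H j - hh j‖ ≤ L * ‖z j - z 0‖)
    (V V2 : ℝ) (hV : 0 ≤ V) (hV2 : 0 ≤ V2)
    (hvar : ∑ j ∈ range ℓ, ‖hh j - G (z 0)‖^2 ≤ V)
    (hcan : ‖∑ j ∈ range ℓ, (hh j - G (z 0))‖^2 ≤ (ℓ:ℝ) * V2) :
    f (z ℓ) ≤ f (z 0) - γ*ℓ/4*‖G (z 0)‖^2 + γ*(10*(L*γ*ℓ)^2*V + 3*V2) := by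
  set G0 := G (z 0) with hG0def
  set g0 := ‖G0‖ with hg0def
  set E1 := ∑ u ∈ range ℓ, ‖hh u - G0‖ with hE1def
  set Ev := ∑ u ∈ range ℓ, (hh u - G0) with hEvdef
  set Rv := ∑ u ∈ range ℓ, (H u - hh u) with hRvdef
  set S := ∑ u ∈ range ℓ, H u with hSdef
  set K := L*γ*ℓ with hKdef
  have hg00 : 0 ≤ g0 := norm_nonneg _
  have hE10 : 0 ≤ E1 := sum_nonneg fun i _ => norm_nonneg _
  have hK0 : 0 ≤ K := by positivity
  have hSH := sgd_drift_SH z H hh G0 L γ hL hγ ℓ hK hz hHh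
  have hE1V : E1^2 ≤ (ℓ:ℝ)*V := by
    calc E1^2 ≤ (range ℓ).card * ∑ u ∈ range ℓ, ‖hh u - G0‖^2 := sq_sum_le_card_mul_sum_sq
    _ ≤ (ℓ:ℝ)*V := by rw [card_range]; exact mul_le_mul_of_nonneg_left hvar (by positivity)
  have hdecomp : S = (ℓ:ℝ) • G0 + Ev + Rv := by
    have h1 : ∀ u ∈ range ℓ, H u = G0 + (hh u - G0) + (H u - hh u) := by
      intro u _; abel
    rw [hSdef, sum_congr rfl h1, sum_add_distrib, sum_add_distrib, sum_const, card_range]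
    congr 1
    · congr 1
      rw [← Nat.cast_smul_eq_nsmul ℝ]
  have hRvb : ‖Rv‖ ≤ 2*K*((ℓ:ℝ)*g0+E1) := by
    calc ‖Rv‖ ≤ ∑ u ∈ range ℓ, ‖H u - hh u‖ := norm_sum_le _ _
    _ ≤ ∑ _u ∈ range ℓ, L*(γ*(∑ v ∈ range ℓ, ‖H v‖)) := by
        apply sum_le_sum
        intro u hu
        calc ‖H u - hh u‖ ≤ L * ‖z u - z 0‖ := hHh u
        _ ≤ L * (γ*(∑ v ∈ range ℓ, ‖H v‖)) := by
            apply mul_le_mul_of_nonneg_left _ hL.le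
            exact sgd_D_le z H γ hγ.le hz ℓ u (mem_range.mp hu).le
    _ = (ℓ:ℝ)*(L*(γ*(∑ v ∈ range ℓ, ‖H v‖))) := by rw [sum_const, card_range, nsmul_eq_mul]
    _ ≤ (ℓ:ℝ)*(L*(γ*(2*((ℓ:ℝ)*g0+E1)))) := by
        apply mul_le_mul_of_nonneg_left _ (by positivity)
        apply mul_le_mul_of_nonneg_left _ hL.le
        apply mul_le_mul_of_nonneg_left hSH hγ.le
    _ = 2*K*((ℓ:ℝ)*g0+E1) := by rw [hKdef]; ring
  set e := ‖Ev‖ with hedef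
  have he0 : 0 ≤ e := norm_nonneg _
  have hΔ : z ℓ - z 0 = -(γ • S) := by rw [sgd_iterate_eq z H γ hz ℓ]; abel
  have hdes := hdesc (z 0) (z ℓ)
  rw [hΔ] at hdes
  have hinner : @inner ℝ _ _ G0 (-(γ • S))
      = -(γ * ((ℓ:ℝ)*g0^2 + @inner ℝ _ _ G0 Ev + @inner ℝ _ _ G0 Rv)) := by
    rw [inner_neg_right, real_inner_smul_right, hdecomp, inner_add_right, inner_add_right,
      real_inner_smul_right, real_inner_self_eq_norm_sq]
  have hiEv : -(@inner ℝ _ _ G0 Ev) ≤ g0 * e := by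
    have h := abs_real_inner_le_norm G0 Ev
    rw [abs_le] at h
    linarith [h.1]
  have hiRv : -(@inner ℝ _ _ G0 Rv) ≤ g0 * (2*K*((ℓ:ℝ)*g0+E1)) := by
    have h1 := abs_real_inner_le_norm G0 Rv
    rw [abs_le] at h1
    have h2 : g0 * ‖Rv‖ ≤ g0 * (2*K*((ℓ:ℝ)*g0+E1)) := mul_le_mul_of_nonneg_left hRvb hg00
    linarith [h1.1]
  have hnormS : ‖S‖ ≤ (ℓ:ℝ)*g0 + e + 2*K*((ℓ:ℝ)*g0+E1) := by
    rw [hdecomp]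
    calc ‖(ℓ:ℝ) • G0 + Ev + Rv‖ ≤ ‖(ℓ:ℝ) • G0 + Ev‖ + ‖Rv‖ := norm_add_le _ _
    _ ≤ (‖(ℓ:ℝ) • G0‖ + ‖Ev‖) + ‖Rv‖ := by gcongr; exact norm_add_le _ _
    _ ≤ (ℓ:ℝ)*g0 + e + 2*K*((ℓ:ℝ)*g0+E1) := by
        rw [norm_smul, Real.norm_eq_abs, abs_of_nonneg (by positivity : (0:ℝ) ≤ (ℓ:ℝ))]
        gcongr
  have hnormS2 : ‖-(γ • S)‖^2 = γ^2 * ‖S‖^2 := by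
    rw [norm_neg, norm_smul, Real.norm_eq_abs, abs_of_nonneg hγ.le, mul_pow]
  have hS2 : ‖S‖^2 ≤ 3*(((ℓ:ℝ))^2*g0^2 + e^2 + (2*K*((ℓ:ℝ)*g0+E1))^2) := by
    have h0 : 0 ≤ ‖S‖ := norm_nonneg _
    nlinarith [hnormS, sq_nonneg ((ℓ:ℝ)*g0 - e), sq_nonneg ((ℓ:ℝ)*g0 - 2*K*((ℓ:ℝ)*g0+E1)),
      sq_nonneg (e - 2*K*((ℓ:ℝ)*g0+E1)),
      mul_nonneg (mul_nonneg (by positivity : (0:ℝ) ≤ (ℓ:ℝ)) hg00) he0]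
  have hstep : f (z ℓ) ≤ f (z 0) + γ * (-(((ℓ:ℝ))*g0^2) + g0*e + g0*(2*K*((ℓ:ℝ)*g0+E1))
      + (3/2)*(L*γ)*(((ℓ:ℝ))^2*g0^2 + e^2 + (2*K*((ℓ:ℝ)*g0+E1))^2)) := by
    have hq : L/2 * ‖-(γ • S)‖^2
        ≤ γ*((3/2)*(L*γ)*(((ℓ:ℝ))^2*g0^2 + e^2 + (2*K*((ℓ:ℝ)*g0+E1))^2)) := by
      rw [hnormS2]
      have h := mul_le_mul_of_nonneg_left hS2 (by positivity : (0:ℝ) ≤ L/2 * γ^2)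
      calc L/2 * (γ^2*‖S‖^2) = L/2*γ^2*‖S‖^2 := by ring
      _ ≤ L/2*γ^2*(3*(((ℓ:ℝ))^2*g0^2 + e^2 + (2*K*((ℓ:ℝ)*g0+E1))^2)) := h
      _ = γ*((3/2)*(L*γ)*(((ℓ:ℝ))^2*g0^2 + e^2 + (2*K*((ℓ:ℝ)*g0+E1))^2)) := by ring
    have hlin : @inner ℝ _ _ G0 (-(γ • S))
        ≤ γ*(-(((ℓ:ℝ))*g0^2) + g0*e + g0*(2*K*((ℓ:ℝ)*g0+E1))) := by
      rw [hinner]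
      have h : -(((ℓ:ℝ))*g0^2 + @inner ℝ _ _ G0 Ev + @inner ℝ _ _ G0 Rv)
          ≤ -(((ℓ:ℝ))*g0^2) + g0*e + g0*(2*K*((ℓ:ℝ)*g0+E1)) := by linarith
      calc -(γ * (((ℓ:ℝ))*g0^2 + @inner ℝ _ _ G0 Ev + @inner ℝ _ _ G0 Rv))
          = γ * (-(((ℓ:ℝ))*g0^2 + @inner ℝ _ _ G0 Ev + @inner ℝ _ _ G0 Rv)) := by ring
      _ ≤ γ*(-(((ℓ:ℝ))*g0^2) + g0*e + g0*(2*K*((ℓ:ℝ)*g0+E1))) :=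
          mul_le_mul_of_nonneg_left h hγ.le
    linarith
  have hscal := sgd_scalarW1 (ℓ:ℝ) K g0 e E1 V V2 (L*γ) (by exact_mod_cast hℓ1) hK0 hK hg00 he0
    hE10 hV hV2 hcan hE1V (by rw [hKdef]) (by positivity)
  have hfin : γ * (-(((ℓ:ℝ))*g0^2) + g0*e + g0*(2*K*((ℓ:ℝ)*g0+E1))
      + (3/2)*(L*γ)*(((ℓ:ℝ))^2*g0^2 + e^2 + (2*K*((ℓ:ℝ)*g0+E1))^2))
      ≤ γ * (-(((ℓ:ℝ))/4*g0^2) + 10*K^2*V + 3*V2) :=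
    mul_le_mul_of_nonneg_left hscal hγ.le
  have heq : γ * (-(((ℓ:ℝ))/4*g0^2) + 10*K^2*V + 3*V2)
      = - (γ*ℓ/4*g0^2) + γ*(10*K^2*V + 3*V2) := by ring
  rw [heq] at hfin
  linarith

lemma sgd_combine (S F Jp q : ℝ)
    (h1 : S ≤ 12*(F+Jp) + 16*q + (3/4)*(F+Jp) + 16*q)
    (h2 : Jp ≤ 394*q) (hF : 0 ≤ F) (hq : 0 ≤ q) : S ≤ 13*F + 5056*q := by
  linarith

end SGDAux
section Main

lemma sgd_grad_avg {E : Type*} [NormedAddCommGroup E] [InnerProductSpace ℝ E] [CompleteSpace E]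
    {n : ℕ} (f' : Fin n → E → ℝ) (hdiff : ∀ i, Differentiable ℝ (f' i))
    (c : ℝ) (x : E) :
    HasGradientAt (fun x => c * ∑ i, f' i x) (c • ∑ i, gradient (f' i) x) x := by
  have h1 : HasFDerivAt (fun x => c * ∑ i, f' i x)
      (c • ∑ i, fderiv ℝ (f' i) x) x :=
    (HasFDerivAt.fun_sum (fun i _ => (hdiff i x).hasFDerivAt)).const_mul c
  have h2 : (toDual ℝ E) (c • ∑ i, gradient (f' i) x) = c • ∑ i, fderiv ℝ (f' i) x := by
    rw [map_smul, map_sum]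
    congr 1
    apply Finset.sum_congr rfl
    intro i _
    simp [gradient]
  rw [HasGradientAt, HasGradientAtFilter, h2]
  exact h1

/-- Convergence rate of incremental gradient / single shuffle SGD
(eq. (6) in the paper): for some absolute constant C > 0,
(1/(T+1)) ∑_t ‖∇f(x_t)‖² ≤ C·(F₀/(γ(T+1)) + Lγ·min{1, Lγn}·n·σ_SGD²). -/
theorem stmt_10 :
    ∃ C : ℝ, 0 < C ∧
      ∀ (d n : ℕ), 1 ≤ d → ∀ hn : 0 < n,
      ∀ L : ℝ, 0 < L →
      ∀ f' : Fin n → EuclideanSpace ℝ (Fin d) → ℝ,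
        (∀ i, Differentiable ℝ (f' i)) →
        (∀ i (x y : EuclideanSpace ℝ (Fin d)),
          ‖gradient (f' i) x - gradient (f' i) y‖ ≤ L * ‖x - y‖) →
      ∀ f : EuclideanSpace ℝ (Fin d) → ℝ,
        f = (fun x => (1 / n : ℝ) * ∑ i, f' i x) →
      ∀ (π : Equiv.Perm (Fin n)) (idx : ℕ → Fin n),
        (∀ t : ℕ, idx t = π ⟨t % n, Nat.mod_lt t hn⟩) →
      ∀ γ : ℝ, 0 < γ → γ ≤ 1 / (8 * Real.sqrt 3 * L) →
      ∀ σ2 : ℝ,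
        (∀ y : EuclideanSpace ℝ (Fin d),
          (1 / n : ℝ) * ∑ i, ‖gradient (f' i) y - gradient f y‖ ^ 2 ≤ σ2) →
      ∀ fstar : ℝ, (∀ y, fstar ≤ f y) → fstar = (⨅ y, f y) →
      ∀ (T : ℕ) (x : ℕ → EuclideanSpace ℝ (Fin d)),
        (∀ t, x (t + 1) = x t - γ • gradient (f' (idx t)) (x t)) →
        (1 / (T + 1 : ℝ)) * ∑ t ∈ Finset.range (T + 1), ‖gradient f (x t)‖ ^ 2 ≤
          C * ((f (x 0) - fstar) / (γ * (T + 1)) +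
            L * γ * min 1 (L * γ * n) * n * σ2) := by
  refine ⟨10000, by norm_num, ?_⟩
  intro d n hd hn L hL f' hdiff hlip f hf π idx hidx γ hγ hγle σ2 hσ fstar hlow hinf T x hx
  haveI : NeZero n := ⟨hn.ne'⟩
  set G : EuclideanSpace ℝ (Fin d) → EuclideanSpace ℝ (Fin d) := gradient f with hGdef
  -- step size numerics
  have hs3 : (1:ℝ) ≤ Real.sqrt 3 := by
    rw [show (1:ℝ) = Real.sqrt 1 by simp]
    exact Real.sqrt_le_sqrt (by norm_num)
  have h8L : (0:ℝ) < 8 * Real.sqrt 3 * L := by positivity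
  have h8Lγ : 8*(L*γ) ≤ 1 := by
    have h1 : γ * (8 * Real.sqrt 3 * L) ≤ 1 := by
      rw [← le_div_iff₀ h8L]
      exact hγle
    nlinarith
  have hLγpos : 0 < L*γ := mul_pos hL hγ
  -- gradient formula
  have hgradf : ∀ xx : EuclideanSpace ℝ (Fin d), HasGradientAt f ((1/(n:ℝ)) • ∑ i, gradient (f' i) xx) xx := by
    intro xx
    rw [hf]
    exact sgd_grad_avg f' hdiff _ xx
  have hGx : ∀ xx : EuclideanSpace ℝ (Fin d), G xx = (1/(n:ℝ)) • ∑ i, gradient (f' i) xx :=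
    fun xx => (hgradf xx).gradient
  have hgradG : ∀ xx : EuclideanSpace ℝ (Fin d), HasGradientAt f (G xx) xx := by
    intro xx
    rw [hGx xx]
    exact hgradf xx
  have hn' : (0:ℝ) < (n:ℝ) := by exact_mod_cast hn
  have hGlip : ∀ a b : EuclideanSpace ℝ (Fin d), ‖G a - G b‖ ≤ L * ‖a - b‖ := by
    intro a b
    rw [hGx a, hGx b, ← smul_sub, ← Finset.sum_sub_distrib]
    rw [norm_smul, Real.norm_eq_abs, abs_of_nonneg (by positivity : (0:ℝ) ≤ 1/(n:ℝ))]
    calc (1/(n:ℝ)) * ‖∑ i, (gradient (f' i) a - gradient (f' i) b)‖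
        ≤ (1/(n:ℝ)) * ∑ i, ‖gradient (f' i) a - gradient (f' i) b‖ := by
          apply mul_le_mul_of_nonneg_left (norm_sum_le _ _) (by positivity)
    _ ≤ (1/(n:ℝ)) * ∑ _i : Fin n, L * ‖a - b‖ := by
          apply mul_le_mul_of_nonneg_left _ (by positivity)
          exact Finset.sum_le_sum (fun i _ => hlip i a b)
    _ = L * ‖a - b‖ := by
          rw [Finset.sum_const, Finset.card_univ, Fintype.card_fin, nsmul_eq_mul]
          field_simp
  have hdesc : ∀ a b : EuclideanSpace ℝ (Fin d), f b ≤ f a + @inner ℝ _ _ (G a) (b - a) + L/2 * ‖b-a‖^2 :=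
    sgd_descent_lemma f G L hL.le hgradG hGlip
  -- gradient squared bounded by function gap
  have hGsq : ∀ xx : EuclideanSpace ℝ (Fin d), ‖G xx‖^2 ≤ 2*L*(f xx - fstar) := by
    intro xx
    have h1 := hdesc xx (xx - (1/L) • G xx)
    have h2 : (xx - (1/L) • G xx) - xx = -((1/L) • G xx) := by abel
    rw [h2] at h1
    rw [inner_neg_right, real_inner_smul_right, real_inner_self_eq_norm_sq] at h1
    rw [norm_neg, norm_smul, Real.norm_eq_abs, abs_of_nonneg (by positivity : (0:ℝ) ≤ 1/L)] at h1
    have h3 := hlow (xx - (1/L) • G xx)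
    have hL2 : 0 < L*L := mul_pos hL hL
    have h4 : (1/L) * ‖G xx‖^2 - L/2 * ((1/L)*‖G xx‖)^2 = ‖G xx‖^2/(2*L) := by
      field_simp
      ring
    have h5 : ‖G xx‖^2/(2*L) ≤ f xx - fstar := by linarith
    have h6 := (div_le_iff₀ (by positivity : (0:ℝ) < 2*L)).mp h5
    linarith
  -- variance facts
  have hσ0 : 0 ≤ σ2 := by
    have h1 : (0:ℝ) ≤ (1/(n:ℝ)) * ∑ i, ‖gradient (f' i) (x 0) - G (x 0)‖^2 := by positivity
    exact le_trans h1 (hσ (x 0))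
  have hnσ0 : (0:ℝ) ≤ (n:ℝ)*σ2 := by positivity
  have hσ' : ∀ y : EuclideanSpace ℝ (Fin d), ∑ i, ‖gradient (f' i) y - G y‖^2 ≤ (n:ℝ)*σ2 := by
    intro y
    have h1 := hσ y
    have h2 := mul_le_mul_of_nonneg_left h1 hn'.le
    calc ∑ i, ‖gradient (f' i) y - G y‖^2
        = (n:ℝ) * ((1/(n:ℝ)) * ∑ i, ‖gradient (f' i) y - G y‖^2) := by
          field_simp
    _ ≤ (n:ℝ)*σ2 := h2
  -- injectivity within a window
  have hinjsum : ∀ (s ℓ : ℕ), ℓ ≤ n → ∀ (q : Fin n → ℝ), (∀ i, 0 ≤ q i) →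
      ∑ j ∈ Finset.range ℓ, q (idx (s+j)) ≤ ∑ i, q i := by
    intro s ℓ hℓ q hq
    have hinj : ∀ j ∈ Finset.range ℓ, ∀ j' ∈ Finset.range ℓ,
        idx (s+j) = idx (s+j') → j = j' := by
      intro j hj j' hj' heq
      rw [hidx, hidx] at heq
      have h2 : (s+j) % n = (s+j') % n := by
        have h3 := π.injective heq
        exact congrArg Fin.val h3
      have hmod : j % n = j' % n := Nat.ModEq.add_left_cancel' s h2
      rwa [Nat.mod_eq_of_lt (lt_of_lt_of_le (Finset.mem_range.mp hj) hℓ),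
        Nat.mod_eq_of_lt (lt_of_lt_of_le (Finset.mem_range.mp hj') hℓ)] at hmod
    calc ∑ j ∈ Finset.range ℓ, q (idx (s+j))
        = ∑ i ∈ (Finset.range ℓ).image (fun j => idx (s+j)), q i := (Finset.sum_image hinj).symm
    _ ≤ ∑ i, q i := Finset.sum_le_sum_of_subset_of_nonneg (Finset.subset_univ _)
        (fun i _ _ => hq i)
  have hvarwin : ∀ (s ℓ : ℕ), ℓ ≤ n → ∀ y : EuclideanSpace ℝ (Fin d),
      ∑ j ∈ Finset.range ℓ, ‖gradient (f' (idx (s+j))) y - G y‖^2 ≤ (n:ℝ)*σ2 :=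
    fun s ℓ hℓ y => le_trans
      (hinjsum s ℓ hℓ (fun i => ‖gradient (f' i) y - G y‖^2) (fun i => by positivity))
      (hσ' y)
  -- full pass cancellation
  open Fin.NatCast in
  have hfullsum : ∀ (s : ℕ) (y : EuclideanSpace ℝ (Fin d)),
      ∑ j ∈ Finset.range n, (gradient (f' (idx (s+j))) y - G y) = 0 := by
    intro s y
    have h1 : ∑ j ∈ Finset.range n, gradient (f' (idx (s+j))) y = ∑ i, gradient (f' i) y := by
      rw [← Fin.sum_univ_eq_sum_range (fun j => gradient (f' (idx (s+j))) y) n]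
      have hidx2 : ∀ j : Fin n, idx (s + (j:ℕ)) = π ((s:Fin n) + j) := by
        intro j
        rw [hidx]
        congr 1
        apply Fin.ext
        rw [Fin.add_def]
        simp only [Fin.val_natCast]
        conv_lhs => rw [Nat.add_mod]
        rw [Nat.mod_eq_of_lt j.isLt]
      calc ∑ j : Fin n, gradient (f' (idx (s + (j:ℕ)))) y
          = ∑ j : Fin n, gradient (f' (π ((s:Fin n) + j))) y := by
            apply Finset.sum_congr rfl
            intro j _
            rw [hidx2 j]
      _ = ∑ i, gradient (f' i) y :=
            Fintype.sum_equiv ((Equiv.addLeft ((s:ℕ) : Fin n)).trans π)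
              (fun j => gradient (f' (π ((s:Fin n) + j))) y)
              (fun i => gradient (f' i) y) (fun j => rfl)
    rw [Finset.sum_sub_distrib, h1, Finset.sum_const, Finset.card_range]
    rw [hGx y, ← Nat.cast_smul_eq_nsmul ℝ, smul_smul]
    rw [show (n:ℝ) * (1/(n:ℝ)) = 1 by field_simp, one_smul, sub_self]
  -- choose window length W and partial-window variance V2
  obtain ⟨W, V2, hW1, hWn, hKW, hminW, hV20, hcanW, hV2acc⟩ :
      ∃ (W : ℕ) (V2 : ℝ), 1 ≤ W ∧ W ≤ n ∧ L*γ*(W:ℝ) ≤ 1/8 ∧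
        L*γ*(W:ℝ) ≤ min 1 (L*γ*(n:ℝ)) ∧ 0 ≤ V2 ∧
        (∀ s : ℕ, ‖∑ j ∈ Finset.range W,
            (gradient (f' (idx (s+j))) (x s) - G (x s))‖^2 ≤ (W:ℝ)*V2) ∧
        (∀ Jr : ℝ, 0 ≤ Jr → Jr * (W:ℝ) ≤ (T:ℝ)+1 →
          Jr * V2 ≤ 128*((T:ℝ)+1)*(L*γ*(min 1 (L*γ*(n:ℝ)))*((n:ℝ)*σ2))) := by
    by_cases hcase : 8*(L*γ)*(n:ℝ) ≤ 1
    · -- full pass regime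
      refine ⟨n, 0, hn, le_refl n, ?_, ?_, le_refl 0, ?_, ?_⟩
      · nlinarith
      · apply le_min
        · nlinarith
        · exact le_refl _
      · intro s
        rw [hfullsum s (x s)]
        simp
      · intro Jr hJr0 hJrW
        rw [mul_zero]
        have hmin0 : 0 ≤ min 1 (L*γ*(n:ℝ)) := le_min (by norm_num) (by positivity)
        positivity
    · -- chunk regime
      push_neg at hcase
      set xr := 1/(8*(L*γ)) with hxr
      have hxr1 : (1:ℝ) ≤ xr := by
        rw [hxr, le_div_iff₀ (by positivity)]
        linarith
      have hxr0 : (0:ℝ) ≤ xr := by linarith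
      refine ⟨Nat.floor xr, (n:ℝ)*σ2, ?_, ?_, ?_, ?_, hnσ0, ?_, ?_⟩
      · exact Nat.le_floor (by exact_mod_cast hxr1)
      · -- W ≤ n
        have h1 : (Nat.floor xr : ℝ) ≤ xr := Nat.floor_le hxr0
        have h2 : xr < (n:ℝ) := by
          rw [hxr, div_lt_iff₀ (by positivity)]
          nlinarith
        have : (Nat.floor xr : ℝ) < (n:ℝ) := lt_of_le_of_lt h1 h2
        exact_mod_cast this.le
      · -- L γ W ≤ 1/8
        have h1 : (Nat.floor xr : ℝ) ≤ xr := Nat.floor_le hxr0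
        have h2 : L*γ*(Nat.floor xr : ℝ) ≤ L*γ*xr := by
          apply mul_le_mul_of_nonneg_left h1 hLγpos.le
        have h3 : L*γ*xr = 1/8 := by
          rw [hxr]
          field_simp
        linarith
      · -- ≤ min
        have h1 : (Nat.floor xr : ℝ) ≤ xr := Nat.floor_le hxr0
        have h3 : L*γ*xr = 1/8 := by rw [hxr]; field_simp
        have h2 : L*γ*(Nat.floor xr : ℝ) ≤ 1/8 := by nlinarith
        apply le_min
        · linarith
        · -- LγW ≤ Lγn
          have h4 : xr < (n:ℝ) := by
            rw [hxr, div_lt_iff₀ (by positivity)]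
            nlinarith
          nlinarith
      · -- hcanW
        intro s
        set ℓ := Nat.floor xr with hℓ
        have hℓn : ℓ ≤ n := by
          have h1 : (ℓ:ℝ) ≤ xr := Nat.floor_le hxr0
          have h2 : xr < (n:ℝ) := by
            rw [hxr, div_lt_iff₀ (by positivity)]
            nlinarith
          exact_mod_cast (lt_of_le_of_lt h1 h2).le
        have h1 : ‖∑ j ∈ Finset.range ℓ, (gradient (f' (idx (s+j))) (x s) - G (x s))‖
            ≤ ∑ j ∈ Finset.range ℓ, ‖gradient (f' (idx (s+j))) (x s) - G (x s)‖ :=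
          norm_sum_le _ _
        have h2 : (∑ j ∈ Finset.range ℓ, ‖gradient (f' (idx (s+j))) (x s) - G (x s)‖)^2
            ≤ (ℓ:ℝ) * ∑ j ∈ Finset.range ℓ, ‖gradient (f' (idx (s+j))) (x s) - G (x s)‖^2 := by
          have := sq_sum_le_card_mul_sum_sq
            (s := Finset.range ℓ)
            (f := fun j => ‖gradient (f' (idx (s+j))) (x s) - G (x s)‖)
          rwa [Finset.card_range] at this
        have h3 := hvarwin s ℓ hℓn (x s)
        have h4 : ‖∑ j ∈ Finset.range ℓ, (gradient (f' (idx (s+j))) (x s) - G (x s))‖^2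
            ≤ (∑ j ∈ Finset.range ℓ, ‖gradient (f' (idx (s+j))) (x s) - G (x s)‖)^2 := by
          apply pow_le_pow_left₀ (norm_nonneg _) h1
        calc ‖∑ j ∈ Finset.range ℓ, (gradient (f' (idx (s+j))) (x s) - G (x s))‖^2
            ≤ (ℓ:ℝ) * ∑ j ∈ Finset.range ℓ, ‖gradient (f' (idx (s+j))) (x s) - G (x s)‖^2 :=
              le_trans h4 h2
        _ ≤ (ℓ:ℝ) * ((n:ℝ)*σ2) := by
              apply mul_le_mul_of_nonneg_left h3 (by positivity)
      · -- accounting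
        intro Jr hJr0 hJrW
        set ℓ := Nat.floor xr with hℓ
        have h16 : (1:ℝ) ≤ 16*(L*γ)*(ℓ:ℝ) := by
          rcases le_or_gt 2 xr with h2 | h2
          · have h1 : xr - 1 ≤ (ℓ:ℝ) := by
              have := Nat.lt_floor_add_one xr
              linarith
            have h3 : xr/2 ≤ (ℓ:ℝ) := by linarith
            have h4 : L*γ*xr = 1/8 := by rw [hxr]; field_simp
            nlinarith
          · have h1 : (1:ℝ) ≤ (ℓ:ℝ) := by
              exact_mod_cast Nat.le_floor (by exact_mod_cast hxr1)
            have h4 : L*γ*xr = 1/8 := by rw [hxr]; field_simp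
            have h5 : xr < 2 := h2
            have h6 : 1/16 ≤ L*γ := by nlinarith
            nlinarith
        have hmin : (1:ℝ)/8 ≤ min 1 (L*γ*(n:ℝ)) := by
          apply le_min
          · norm_num
          · nlinarith
        have hJr16 : Jr ≤ 16*(L*γ)*((T:ℝ)+1) := by
          calc Jr = Jr * 1 := by ring
          _ ≤ Jr * (16*(L*γ)*(ℓ:ℝ)) := by
              apply mul_le_mul_of_nonneg_left h16 hJr0
          _ = 16*(L*γ)*(Jr*(ℓ:ℝ)) := by ring
          _ ≤ 16*(L*γ)*((T:ℝ)+1) := by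
              apply mul_le_mul_of_nonneg_left hJrW (by positivity)
        calc Jr * ((n:ℝ)*σ2) ≤ (16*(L*γ)*((T:ℝ)+1)) * ((n:ℝ)*σ2) := by
              apply mul_le_mul_of_nonneg_right hJr16 hnσ0
        _ = 128*((T:ℝ)+1)*(L*γ*(1/8)*((n:ℝ)*σ2)) := by ring
        _ ≤ 128*((T:ℝ)+1)*(L*γ*(min 1 (L*γ*(n:ℝ)))*((n:ℝ)*σ2)) := by
              apply mul_le_mul_of_nonneg_left _ (by positivity)
              apply mul_le_mul_of_nonneg_right _ hnσ0
              apply mul_le_mul_of_nonneg_left hmin hLγpos.le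
  -- window inequality instantiations
  have hdesW : ∀ s : ℕ, f (x (s+W)) ≤ f (x s) - γ*(W:ℝ)/4*‖G (x s)‖^2
      + γ*(10*(L*γ*(W:ℝ))^2*((n:ℝ)*σ2) + 3*V2) := by
    intro s
    exact sgd_window_descent f G L γ hL hγ hdesc W hW1 hKW
      (fun j => x (s+j)) (fun j => gradient (f' (idx (s+j))) (x (s+j)))
      (fun j => gradient (f' (idx (s+j))) (x s))
      (fun j => hx (s+j)) (fun j => hlip (idx (s+j)) (x (s+j)) (x s))
      ((n:ℝ)*σ2) V2 hnσ0 hV20 (hvarwin s W hWn (x s)) (hcanW s)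
  have hconv : ∀ (s ℓ : ℕ), ℓ ≤ n → L*γ*(ℓ:ℝ) ≤ 1/8 →
      ∑ j ∈ Finset.range ℓ, ‖G (x (s+j))‖^2
        ≤ 3*((ℓ:ℝ)*‖G (x s)‖^2) + 16*(L*γ*(ℓ:ℝ))^2*((n:ℝ)*σ2) := by
    intro s ℓ hℓn hKℓ
    exact sgd_window_conv G L γ hL hγ hGlip ℓ hKℓ
      (fun j => x (s+j)) (fun j => gradient (f' (idx (s+j))) (x (s+j)))
      (fun j => gradient (f' (idx (s+j))) (x s))
      (fun j => hx (s+j)) (fun j => hlip (idx (s+j)) (x (s+j)) (x s))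
      ((n:ℝ)*σ2) hnσ0 (hvarwin s ℓ hℓn (x s))
  set pen := 10*(L*γ*(W:ℝ))^2*((n:ℝ)*σ2) + 3*V2 with hpendef
  -- potential induction over full windows
  have hpot : ∀ k : ℕ, f (x (k*W)) - fstar
      + γ*(W:ℝ)/4 * ∑ i ∈ Finset.range k, ‖G (x (i*W))‖^2
      ≤ (f (x 0) - fstar) + (k:ℝ)*(γ*pen) := by
    intro k
    induction k with
    | zero => simp
    | succ k ih =>
      have h1 := hdesW (k*W)
      have h2 : (k+1)*W = k*W + W := by rw [Nat.succ_mul]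
      rw [h2, Finset.sum_range_succ]
      have h3 : γ*(W:ℝ)/4 * (∑ i ∈ Finset.range k, ‖G (x (i*W))‖^2 + ‖G (x (k*W))‖^2)
          = γ*(W:ℝ)/4 * ∑ i ∈ Finset.range k, ‖G (x (i*W))‖^2
            + γ*(W:ℝ)/4 * ‖G (x (k*W))‖^2 := by ring
      rw [h3]
      push_cast
      linarith
  -- sums split
  set J := (T+1) / W with hJdef
  set lam := (T+1) % W with hlamdef
  have hW0 : 0 < W := hW1
  have hNsplit : T+1 = J*W + lam := by
    rw [hJdef, hlamdef, Nat.mul_comm]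
    exact (Nat.div_add_mod (T+1) W).symm
  have hgrid : ∀ (m : ℕ), ∑ t ∈ Finset.range (m*W), ‖G (x t)‖^2
      = ∑ k ∈ Finset.range m, ∑ j ∈ Finset.range W, ‖G (x (k*W+j))‖^2 := by
    intro m
    induction m with
    | zero => simp
    | succ m ih => rw [Nat.succ_mul, Finset.sum_range_add, ih, Finset.sum_range_succ]
  have hsplitsum : ∑ t ∈ Finset.range (T+1), ‖G (x t)‖^2
      = (∑ k ∈ Finset.range J, ∑ j ∈ Finset.range W, ‖G (x (k*W+j))‖^2)
        + ∑ j ∈ Finset.range lam, ‖G (x (J*W+j))‖^2 := by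
    conv_lhs => rw [hNsplit]
    rw [Finset.sum_range_add, hgrid J]
  -- per-window conversion bounds
  have hAk : ∀ k : ℕ, ∑ j ∈ Finset.range W, ‖G (x (k*W+j))‖^2
      ≤ 3*((W:ℝ)*‖G (x (k*W))‖^2) + 16*(L*γ*(W:ℝ))^2*((n:ℝ)*σ2) :=
    fun k => hconv (k*W) W hWn hKW
  have hlamW : lam < W := Nat.mod_lt (T+1) hW0
  have hlamn : lam ≤ n := le_trans hlamW.le hWn
  have hlamr : (lam:ℝ) ≤ (W:ℝ) := by exact_mod_cast hlamW.le
  have hKlam : L*γ*(lam:ℝ) ≤ 1/8 := by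
    have h1 : L*γ*(lam:ℝ) ≤ L*γ*(W:ℝ) := by
      apply mul_le_mul_of_nonneg_left hlamr hLγpos.le
    linarith
  have hAlam := hconv (J*W) lam hlamn hKlam
  -- potential consequences
  have hpotJ := hpot J
  have hSG0 : 0 ≤ ∑ i ∈ Finset.range J, ‖G (x (i*W))‖^2 :=
    Finset.sum_nonneg (fun i _ => by positivity)
  have hΦJ : f (x (J*W)) - fstar ≤ (f (x 0) - fstar) + (J:ℝ)*(γ*pen) := by
    have h1 : 0 ≤ γ*(W:ℝ)/4 * ∑ i ∈ Finset.range J, ‖G (x (i*W))‖^2 := by positivity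
    exact le_trans (le_add_of_nonneg_right h1) hpotJ
  have hSGb : γ*(W:ℝ)/4 * ∑ i ∈ Finset.range J, ‖G (x (i*W))‖^2
      ≤ (f (x 0) - fstar) + (J:ℝ)*(γ*pen) := by
    have h1 := hlow (x (J*W))
    exact le_trans (le_add_of_nonneg_left (sub_nonneg.mpr h1)) hpotJ
  have hG2J : ‖G (x (J*W))‖^2 ≤ 2*L*((f (x 0) - fstar) + (J:ℝ)*(γ*pen)) := by
    have h1 := hGsq (x (J*W))
    have h2 := mul_le_mul_of_nonneg_left hΦJ (by positivity : (0:ℝ) ≤ 2*L)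
    linarith
  -- sum the per-window conversion bounds
  have hsumAk : ∑ k ∈ Finset.range J, ∑ j ∈ Finset.range W, ‖G (x (k*W+j))‖^2
      ≤ 3*(W:ℝ)*(∑ k ∈ Finset.range J, ‖G (x (k*W))‖^2)
        + (J:ℝ)*(16*(L*γ*(W:ℝ))^2*((n:ℝ)*σ2)) := by
    calc ∑ k ∈ Finset.range J, ∑ j ∈ Finset.range W, ‖G (x (k*W+j))‖^2
        ≤ ∑ k ∈ Finset.range J,
            (3*((W:ℝ)*‖G (x (k*W))‖^2) + 16*(L*γ*(W:ℝ))^2*((n:ℝ)*σ2)) :=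
          Finset.sum_le_sum (fun k _ => hAk k)
    _ = 3*(W:ℝ)*(∑ k ∈ Finset.range J, ‖G (x (k*W))‖^2)
        + (J:ℝ)*(16*(L*γ*(W:ℝ))^2*((n:ℝ)*σ2)) := by
        rw [Finset.sum_add_distrib, Finset.sum_const, Finset.card_range, nsmul_eq_mul]
        rw [show (∑ k ∈ Finset.range J, 3*((W:ℝ)*‖G (x (k*W))‖^2))
            = 3*(W:ℝ)*(∑ k ∈ Finset.range J, ‖G (x (k*W))‖^2) from by
          rw [Finset.mul_sum]
          exact Finset.sum_congr rfl (fun k _ => by ring)]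
  -- numeric abbreviations
  set F0 := f (x 0) - fstar with hF0def
  set Nr := (T:ℝ)+1 with hNrdef
  set Mr := min 1 (L*γ*(n:ℝ)) with hMrdef
  set Bq := L*γ*Mr*((n:ℝ)*σ2) with hBqdef
  have hF00 : 0 ≤ F0 := by
    have := hlow (x 0)
    rw [hF0def]
    linarith
  have hMr0 : 0 ≤ Mr := le_min (by norm_num) (by positivity)
  have hBq0 : 0 ≤ Bq := by
    rw [hBqdef]
    have := hnσ0
    positivity
  have hNr0 : (0:ℝ) < Nr := by rw [hNrdef]; positivity
  have hJW : (J:ℝ)*(W:ℝ) ≤ Nr := by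
    have h1 : J*W ≤ T+1 := by
      rw [hJdef]
      exact Nat.div_mul_le_self (T+1) W
    rw [hNrdef]
    exact_mod_cast h1
  have hJ0 : (0:ℝ) ≤ (J:ℝ) := by positivity
  have hlamN : (lam:ℝ) ≤ Nr := by
    have h1 : lam ≤ T+1 := by
      rw [hlamdef]
      exact Nat.mod_le (T+1) W
    rw [hNrdef]
    exact_mod_cast h1
  -- penalty accounting
  have hT1 : (J:ℝ)*((L*γ*(W:ℝ))^2*((n:ℝ)*σ2)) ≤ Nr*Bq := by
    have h1 : (L*γ*(W:ℝ))*((J:ℝ)*(W:ℝ)) ≤ Mr*Nr := by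
      apply mul_le_mul hminW hJW (by positivity) hMr0
    calc (J:ℝ)*((L*γ*(W:ℝ))^2*((n:ℝ)*σ2))
        = (L*γ)*((n:ℝ)*σ2)*((L*γ*(W:ℝ))*((J:ℝ)*(W:ℝ))) := by ring
    _ ≤ (L*γ)*((n:ℝ)*σ2)*(Mr*Nr) := by
        apply mul_le_mul_of_nonneg_left h1 (by positivity)
    _ = Nr*Bq := by rw [hBqdef]; ring
  have hT2 : (J:ℝ)*V2 ≤ 128*Nr*Bq := hV2acc (J:ℝ) hJ0 hJW
  have hT3 : (L*γ*(lam:ℝ))^2*((n:ℝ)*σ2) ≤ Nr*Bq := by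
    have h1 : L*γ*(lam:ℝ) ≤ L*γ*Nr := by
      apply mul_le_mul_of_nonneg_left hlamN hLγpos.le
    have h2 : L*γ*(lam:ℝ) ≤ Mr := by
      have := mul_le_mul_of_nonneg_left hlamr hLγpos.le
      linarith [hminW]
    have h3 : (L*γ*(lam:ℝ))^2 ≤ (L*γ*Nr)*Mr := by
      have h0 : (0:ℝ) ≤ L*γ*(lam:ℝ) := by positivity
      calc (L*γ*(lam:ℝ))^2 = (L*γ*(lam:ℝ))*(L*γ*(lam:ℝ)) := by ring
      _ ≤ (L*γ*Nr)*Mr := mul_le_mul h1 h2 h0 (by positivity)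
    calc (L*γ*(lam:ℝ))^2*((n:ℝ)*σ2) ≤ ((L*γ*Nr)*Mr)*((n:ℝ)*σ2) := by
          apply mul_le_mul_of_nonneg_right h3 hnσ0
    _ = Nr*Bq := by rw [hBqdef]; ring
  -- main chain, multiplied by γ
  have hmain : γ * ∑ t ∈ Finset.range (T+1), ‖G (x t)‖^2 ≤ 13*F0 + 5056*(γ*(Nr*Bq)) := by
    have hA : ∑ t ∈ Finset.range (T+1), ‖G (x t)‖^2
        ≤ 3*(W:ℝ)*(∑ k ∈ Finset.range J, ‖G (x (k*W))‖^2)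
          + (J:ℝ)*(16*(L*γ*(W:ℝ))^2*((n:ℝ)*σ2))
          + (3*((lam:ℝ)*‖G (x (J*W))‖^2) + 16*(L*γ*(lam:ℝ))^2*((n:ℝ)*σ2)) := by
      rw [hsplitsum]
      linarith [hsumAk, hAlam]
    have hB := mul_le_mul_of_nonneg_left hA hγ.le
    -- term 1 : γ*3W*SG ≤ 12*(F0 + J*γ*pen)
    have ht1 : γ*(3*(W:ℝ)*(∑ k ∈ Finset.range J, ‖G (x (k*W))‖^2))
        ≤ 12*(F0 + (J:ℝ)*(γ*pen)) := by
      have h1 : γ*(3*(W:ℝ)*(∑ k ∈ Finset.range J, ‖G (x (k*W))‖^2))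
          = 12*(γ*(W:ℝ)/4 * ∑ k ∈ Finset.range J, ‖G (x (k*W))‖^2) := by ring
      rw [h1, hF0def]
      linarith [hSGb]
    -- term 3 : γ*3*lam*G2J ≤ (3/4)*(F0 + J*γ*pen)
    have ht3 : γ*(3*((lam:ℝ)*‖G (x (J*W))‖^2)) ≤ (3/4)*(F0 + (J:ℝ)*(γ*pen)) := by
      have h1 : γ*(3*((lam:ℝ)*‖G (x (J*W))‖^2))
          ≤ γ*(3*((lam:ℝ)*(2*L*(F0 + (J:ℝ)*(γ*pen))))) := by
        apply mul_le_mul_of_nonneg_left _ hγ.le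
        apply mul_le_mul_of_nonneg_left _ (by norm_num)
        apply mul_le_mul_of_nonneg_left _ (by positivity)
        rw [hF0def]
        exact hG2J
      have hpen0 : 0 ≤ pen := by
        rw [hpendef]
        positivity
      have hFp0 : 0 ≤ F0 + (J:ℝ)*(γ*pen) := by positivity
      have h2 : γ*(3*((lam:ℝ)*(2*L*(F0 + (J:ℝ)*(γ*pen)))))
          = 6*(L*γ*(lam:ℝ))*(F0 + (J:ℝ)*(γ*pen)) := by ring
      have h3 : 6*(L*γ*(lam:ℝ))*(F0 + (J:ℝ)*(γ*pen)) ≤ 6*(1/8)*(F0 + (J:ℝ)*(γ*pen)) := by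
        apply mul_le_mul_of_nonneg_right _ hFp0
        linarith [hKlam]
      calc γ*(3*((lam:ℝ)*‖G (x (J*W))‖^2)) ≤ 6*(L*γ*(lam:ℝ))*(F0 + (J:ℝ)*(γ*pen)) := by
            rw [← h2]; exact h1
      _ ≤ 6*(1/8)*(F0 + (J:ℝ)*(γ*pen)) := h3
      _ = (3/4)*(F0 + (J:ℝ)*(γ*pen)) := by ring
    -- J*pen accounting
    have hJpen : (J:ℝ)*(γ*pen) ≤ γ*(394*(Nr*Bq)) := by
      have h1 : (J:ℝ)*(γ*pen) = γ*(10*((J:ℝ)*((L*γ*(W:ℝ))^2*((n:ℝ)*σ2))) + 3*((J:ℝ)*V2)) := by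
        rw [hpendef]; ring
      rw [h1]
      apply mul_le_mul_of_nonneg_left _ hγ.le
      have h2 := hT1
      have h3 := hT2
      linarith
    have ht2 : γ*((J:ℝ)*(16*(L*γ*(W:ℝ))^2*((n:ℝ)*σ2))) ≤ 16*(γ*(Nr*Bq)) := by
      have h2 : γ*((J:ℝ)*(16*(L*γ*(W:ℝ))^2*((n:ℝ)*σ2))) ≤ γ*(16*(Nr*Bq)) := by
        apply mul_le_mul_of_nonneg_left _ hγ.le
        have h1 : (J:ℝ)*(16*(L*γ*(W:ℝ))^2*((n:ℝ)*σ2))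
            = 16*((J:ℝ)*((L*γ*(W:ℝ))^2*((n:ℝ)*σ2))) := by ring
        rw [h1]
        linarith only [hT1]
      calc γ*((J:ℝ)*(16*(L*γ*(W:ℝ))^2*((n:ℝ)*σ2))) ≤ γ*(16*(Nr*Bq)) := h2
      _ = 16*(γ*(Nr*Bq)) := by ring
    have ht4 : γ*(16*(L*γ*(lam:ℝ))^2*((n:ℝ)*σ2)) ≤ 16*(γ*(Nr*Bq)) := by
      have h2 : γ*(16*(L*γ*(lam:ℝ))^2*((n:ℝ)*σ2)) ≤ γ*(16*(Nr*Bq)) := by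
        apply mul_le_mul_of_nonneg_left _ hγ.le
        have h1 : 16*(L*γ*(lam:ℝ))^2*((n:ℝ)*σ2) = 16*((L*γ*(lam:ℝ))^2*((n:ℝ)*σ2)) := by ring
        rw [h1]
        linarith only [hT3]
      calc γ*(16*(L*γ*(lam:ℝ))^2*((n:ℝ)*σ2)) ≤ γ*(16*(Nr*Bq)) := h2
      _ = 16*(γ*(Nr*Bq)) := by ring
    have hexp : γ * (3*(W:ℝ)*(∑ k ∈ Finset.range J, ‖G (x (k*W))‖^2)
          + (J:ℝ)*(16*(L*γ*(W:ℝ))^2*((n:ℝ)*σ2))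
          + (3*((lam:ℝ)*‖G (x (J*W))‖^2) + 16*(L*γ*(lam:ℝ))^2*((n:ℝ)*σ2)))
        = γ*(3*(W:ℝ)*(∑ k ∈ Finset.range J, ‖G (x (k*W))‖^2))
          + γ*((J:ℝ)*(16*(L*γ*(W:ℝ))^2*((n:ℝ)*σ2)))
          + γ*(3*((lam:ℝ)*‖G (x (J*W))‖^2)) + γ*(16*(L*γ*(lam:ℝ))^2*((n:ℝ)*σ2)) := by ring
    rw [hexp] at hB
    have hfinal : γ * ∑ t ∈ Finset.range (T+1), ‖G (x t)‖^2
        ≤ 12*(F0 + (J:ℝ)*(γ*pen)) + 16*(γ*(Nr*Bq)) + (3/4)*(F0 + (J:ℝ)*(γ*pen))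
          + 16*(γ*(Nr*Bq)) :=
      hB.trans (add_le_add (add_le_add (add_le_add ht1 ht2) ht3) ht4)
    have hJpen2 : (J:ℝ)*(γ*pen) ≤ 394*(γ*(Nr*Bq)) := by
      calc (J:ℝ)*(γ*pen) ≤ γ*(394*(Nr*Bq)) := hJpen
      _ = 394*(γ*(Nr*Bq)) := by ring
    have hγNB : 0 ≤ γ*(Nr*Bq) := by positivity
    exact sgd_combine _ _ _ _ hfinal hJpen2 hF00 hγNB
  -- conclude
  have hSig0 : 0 ≤ ∑ t ∈ Finset.range (T+1), ‖G (x t)‖^2 :=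
    Finset.sum_nonneg (fun t _ => by positivity)
  have hγN : (0:ℝ) < γ*Nr := by positivity
  have hdiv : (1/Nr) * ∑ t ∈ Finset.range (T+1), ‖G (x t)‖^2
      = (γ * ∑ t ∈ Finset.range (T+1), ‖G (x t)‖^2)/(γ*Nr) := by
    rw [eq_div_iff (ne_of_gt hγN)]
    field_simp
  have h2 : (γ * ∑ t ∈ Finset.range (T+1), ‖G (x t)‖^2)/(γ*Nr)
      ≤ (13*F0 + 5056*(γ*(Nr*Bq)))/(γ*Nr) :=
    (div_le_div_iff_of_pos_right hγN).mpr hmain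
  have h3 : (13*F0 + 5056*(γ*(Nr*Bq)))/(γ*Nr) = 13*(F0/(γ*Nr)) + 5056*Bq := by
    field_simp
  have hgoalB : L*γ*Mr*(n:ℝ)*σ2 = Bq := by rw [hBqdef]; ring
  rw [hgoalB]
  have hF0div : 0 ≤ F0/(γ*Nr) := div_nonneg hF00 hγN.le
  calc (1/Nr) * ∑ t ∈ Finset.range (T+1), ‖G (x t)‖^2
      = (γ * ∑ t ∈ Finset.range (T+1), ‖G (x t)‖^2)/(γ*Nr) := hdiv
  _ ≤ (13*F0 + 5056*(γ*(Nr*Bq)))/(γ*Nr) := h2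
  _ = 13*(F0/(γ*Nr)) + 5056*Bq := h3
  _ ≤ 10000*(F0/(γ*Nr) + Bq) := by linarith


end Main
end
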